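/- arXiv:0710.1107 — 10 statements merged into one kernel-verified Lean document; each statement's English description precedes it below -/
import Mathlib

section
/- Let $a:\mathbb{R}_+\to\mathbb{R}_+$ be non-increasing with $\int_0^\infty a(s)\,ds=\infty$, and let $x:\mathbb{R}_+\to H$ be a $C^2$ solution of $\ddot{x}+a\dot{x}+\nabla G(x)=0$ with $\dot{x}$ globally Lipschitz continuous and $\int_0^\infty a(t)|\dot{x}(t)|^2\,dt<\infty$. Then for every $T>0$, $\liminf_{t\to\infty}\sup_{s\in[t,t+T]}|\dot{x}(s)|=0$. -/
/-!
Suppose that for some `ε > 0`, from some time `t₀` on, every window `[t, t + T]` contains a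
point where `‖ẋ‖ > ε`. Cut `[t₀, ∞)` into consecutive blocks of length `L = T + δ`, with
`K δ ≤ ε / 2` for the Lipschitz constant `K` of `ẋ`. Each block then contains an interval of
length `δ` on which `‖ẋ‖ ≥ ε / 2`, and since `a` is non-increasing the energy on the `n`-th block
is at least `(ε / 2)² δ a(t₀ + (n + 1) L)`. Finite energy thus makes `∑ a(t₀ + n L)` converge,
and by the integral test for the non-increasing `a`, so does `∫ a`: a contradiction.
-/

open Set Filter MeasureTheory

section IntegralTest

variable {a : ℝ → ℝ}

theorem AntitoneOn.integrableOn_Icc_of_Ici {p q : ℝ} (ha : AntitoneOn a (Ici p)) :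
    IntegrableOn a (Icc p q) :=
  (ha.mono Icc_subset_Ici_self).integrableOn_isCompact isCompact_Icc

theorem AntitoneOn.setIntegral_Ioc_le_mul {p q : ℝ} (ha : AntitoneOn a (Ici p)) (hpq : p ≤ q) :
    ∫ r in Ioc p q, a r ≤ (q - p) * a p :=
  calc ∫ r in Ioc p q, a r ≤ ∫ _ in Ioc p q, a p :=
        setIntegral_mono_on (ha.integrableOn_Icc_of_Ici.mono_set Ioc_subset_Icc_self)
          (integrableOn_const (by simp)) measurableSet_Ioc
          fun r hr => ha self_mem_Ici (mem_Ici.2 hr.1.le) hr.1.le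
    _ = (q - p) * a p := by simp [Real.volume_real_Ioc_of_le hpq]

theorem AntitoneOn.integrableOn_Ioi_of_summable {t₀ L : ℝ} (ha : AntitoneOn a (Ici t₀))
    (ha_nonneg : ∀ t ≥ t₀, 0 ≤ a t) (hL : 0 < L)
    (hsum : Summable fun n : ℕ => a (t₀ + n * L)) : IntegrableOn a (Ioi t₀) := by
  set u : ℕ → ℝ := fun n => t₀ + n * L
  have hu : Monotone u := fun m n hmn => by simp only [u]; gcongr
  have hu₀ : ∀ n, t₀ ≤ u n := fun n => le_add_of_nonneg_right (by positivity)
  have hau : ∀ n, AntitoneOn a (Ici (u n)) := fun n => ha.mono (Ici_subset_Ici.2 (hu₀ n))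
  have hu_top : Tendsto u atTop atTop :=
    tendsto_atTop_add_const_left _ _ (tendsto_natCast_atTop_atTop.atTop_mul_const hL)
  have hunion : ⋃ n, Ioc (u n) (u (n + 1)) = Ioi t₀ := by
    simpa [u] using iUnion_Ioc_map_succ_eq_Ioi (fun n => hu bot_le)
      (not_bddAbove_of_tendsto_atTop hu_top)
  rw [← hunion]
  refine integrableOn_iUnion_of_summable_integral_norm
    (fun n => (hau n).integrableOn_Icc_of_Ici.mono_set Ioc_subset_Icc_self) ?_
  refine Summable.of_nonneg_of_le (fun n => integral_nonneg fun _ => norm_nonneg _)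
    (fun n => ?_) (hsum.mul_left L)
  calc ∫ r in Ioc (u n) (u (n + 1)), ‖a r‖ = ∫ r in Ioc (u n) (u (n + 1)), a r :=
        setIntegral_congr_fun measurableSet_Ioc fun r hr =>
          Real.norm_of_nonneg (ha_nonneg r ((hu₀ n).trans hr.1.le))
    _ ≤ (u (n + 1) - u n) * a (u n) := (hau n).setIntegral_Ioc_le_mul (hu n.le_succ)
    _ = L * a (t₀ + n * L) := by simp only [u]; push_cast; ring

end IntegralTest

section LipschitzEnergy

variable {a v : ℝ → ℝ} {K : NNReal}

theorem LipschitzWith.sq_mul_le_setIntegral {p q s δ ε : ℝ} (hv : LipschitzWith K v)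
    (ha : AntitoneOn a (Ici p)) (haq : 0 ≤ a q)
    (hint : IntegrableOn (fun t => a t * v t ^ 2) (Ioc p q))
    (hps : p ≤ s) (hsq : s + δ ≤ q) (hδ : 0 ≤ δ) (hKδ : K * δ ≤ ε / 2) (hεs : ε < v s) :
    (ε / 2) ^ 2 * a q * δ ≤ ∫ t in Ioc p q, a t * v t ^ 2 := by
  have hε : 0 ≤ ε / 2 := (mul_nonneg K.coe_nonneg hδ).trans hKδ
  have hsub : Ioc s (s + δ) ⊆ Ioc p q := Ioc_subset_Ioc hps hsq
  have ha_le : ∀ t ∈ Ioc p q, a q ≤ a t := fun t ht =>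
    ha (mem_Ici.2 ht.1.le) (mem_Ici.2 (ht.1.le.trans ht.2)) ht.2
  have hlow : ∀ t ∈ Ioc s (s + δ), (ε / 2) ^ 2 * a q ≤ a t * v t ^ 2 := by
    intro t ht
    have hdist : dist s t ≤ δ := by
      rw [dist_comm, Real.dist_eq, abs_of_pos (sub_pos.2 ht.1)]; linarith [ht.2]
    have hvt : ε / 2 ≤ v t := by
      have hvst : v s - v t ≤ K * dist s t :=
        (le_abs_self _).trans ((Real.dist_eq _ _).symm.trans_le (hv.dist_le_mul s t))
      linarith [mul_le_mul_of_nonneg_left hdist K.coe_nonneg]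
    calc (ε / 2) ^ 2 * a q ≤ v t ^ 2 * a t :=
          mul_le_mul (pow_le_pow_left₀ hε hvt 2) (ha_le t (hsub ht)) haq (sq_nonneg _)
      _ = a t * v t ^ 2 := mul_comm _ _
  calc (ε / 2) ^ 2 * a q * δ ≤ ∫ t in Ioc s (s + δ), a t * v t ^ 2 := by
        simpa [Real.volume_real_Ioc_of_le (le_add_of_nonneg_right hδ), mul_comm] using
          setIntegral_ge_of_const_le measurableSet_Ioc (by simp) hlow (hint.mono_set hsub)
    _ ≤ ∫ t in Ioc p q, a t * v t ^ 2 :=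
        setIntegral_mono_set hint
          (ae_restrict_of_forall_mem measurableSet_Ioc fun t ht =>
            mul_nonneg (haq.trans (ha_le t ht)) (sq_nonneg _))
          hsub.eventuallyLE

end LipschitzEnergy

theorem frequently_forall_Icc_le_of_not_integrableOn {a v : ℝ → ℝ} {K : NNReal}
    (hv : LipschitzWith K v) (ha_nonneg : ∀ t ≥ (0 : ℝ), 0 ≤ a t)
    (ha_mono : AntitoneOn a (Ici 0)) (ha_div : ¬ IntegrableOn a (Ici 0))
    (hdiss : IntegrableOn (fun t => a t * v t ^ 2) (Ici 0)) (T : ℝ) {ε : ℝ} (hε : 0 < ε) :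
    ∃ᶠ t in atTop, ∀ s ∈ Icc t (t + T), v s ≤ ε := by
  by_contra hcon
  simp only [not_frequently, not_forall, not_le, exists_prop] at hcon
  obtain ⟨t₁, ht₁⟩ := eventually_atTop.1 hcon
  set t₀ := max t₁ 0
  have ht₀ : 0 ≤ t₀ := le_max_right _ _
  set δ := ε / (2 * (K + 1))
  have hδ : 0 < δ := by positivity
  have hKδ : K * δ ≤ ε / 2 := by
    rw [mul_div_assoc', div_le_div_iff₀ (by positivity) two_pos]; nlinarith
  set L := max T 0 + δ
  have hL : 0 < L := by positivity
  set u : ℕ → ℝ := fun n => t₀ + n * L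
  have hu : Monotone u := fun m n hmn => by simp only [u]; gcongr
  have hu₀ : ∀ n, 0 ≤ u n := fun n => add_nonneg ht₀ (by positivity)
  have hu_succ : ∀ n : ℕ, u (n + 1) = u n + L := fun n => by simp only [u]; push_cast; ring
  choose s hs hεs using fun n =>
    ht₁ (u n) ((le_max_left _ _).trans (le_add_of_nonneg_right (by positivity)))
  have hblock : ∀ n, (ε / 2) ^ 2 * δ * a (u (n + 1)) ≤
      ∫ t in Ioc (u n) (u (n + 1)), a t * v t ^ 2 := by
    intro n
    rw [mul_right_comm]
    refine hv.sq_mul_le_setIntegral (ha_mono.mono (Ici_subset_Ici.2 (hu₀ n)))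
      (ha_nonneg _ (hu₀ _)) (hdiss.mono_set fun t ht => (hu₀ n).trans ht.1.le) (hs n).1 ?_
      hδ.le hKδ (hεs n)
    rw [hu_succ]; linarith [(hs n).2, le_max_left T 0]
  have hsum_blocks : Summable fun n => ∫ t in Ioc (u n) (u (n + 1)), a t * v t ^ 2 :=
    (hasSum_integral_iUnion (fun _ => measurableSet_Ioc)
      (by simpa only [Order.succ_eq_add_one] using hu.pairwise_disjoint_on_Ioc_succ)
      (hdiss.mono_set (iUnion_subset fun n t ht => (hu₀ n).trans ht.1.le))).summable
  have hsum : Summable fun n : ℕ => a (t₀ + n * L) := by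
    refine (summable_nat_add_iff 1).1
      ((summable_mul_left_iff (by positivity : (ε / 2) ^ 2 * δ ≠ 0)).1 ?_)
    exact hsum_blocks.of_nonneg_of_le
      (fun n => by have := ha_nonneg _ (hu₀ (n + 1)); positivity) hblock
  apply ha_div
  rw [← Icc_union_Ioi_eq_Ici ht₀]
  exact ha_mono.integrableOn_Icc_of_Ici.union
    ((ha_mono.mono (Ici_subset_Ici.2 ht₀)).integrableOn_Ioi_of_summable
      (fun t ht => ha_nonneg t (ht₀.trans ht)) hL hsum)

theorem Filter.liminf_eq_zero_of_frequently_le {α : Type*} {l : Filter α} {f : α → ℝ}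
    (hf : ∀ t, 0 ≤ f t) (h : ∀ ε > 0, ∃ᶠ t in l, f t ≤ ε) : liminf f l = 0 := by
  have hbdd : IsBoundedUnder (· ≥ ·) l f := isBoundedUnder_of ⟨0, hf⟩
  refine le_antisymm (le_of_forall_pos_le_add fun ε hε => ?_)
    (le_liminf_of_le (.of_frequently_le (h 1 one_pos)) (.of_forall hf))
  simpa using liminf_le_of_frequently_le (h ε hε) hbdd

theorem stmt_2_general
    {H : Type*} [NormedAddCommGroup H] [InnerProductSpace ℝ H]
    (a : ℝ → ℝ) (ha_nonneg : ∀ t ≥ (0:ℝ), 0 ≤ a t) (ha_mono : AntitoneOn a (Set.Ici 0))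
    (ha_div : ¬ MeasureTheory.IntegrableOn a (Set.Ici 0))
    (x : ℝ → H)
    (K : NNReal) (hlip : LipschitzWith K (deriv x))
    (hdiss : MeasureTheory.IntegrableOn (fun t => a t * ‖deriv x t‖^2) (Set.Ici 0)) :
    ∀ T > (0:ℝ),
      Filter.liminf (fun t => ⨆ s ∈ Set.Icc t (t + T), ‖deriv x s‖) Filter.atTop = 0 := by
  intro T _
  have hv : LipschitzWith K fun t => ‖deriv x t‖ := one_mul K ▸ lipschitzWith_one_norm.comp hlip
  refine liminf_eq_zero_of_frequently_le
    (fun t => Real.iSup_nonneg fun s => Real.iSup_nonneg fun _ => norm_nonneg _)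
    fun ε hε => ?_
  refine (frequently_forall_Icc_le_of_not_integrableOn hv ha_nonneg ha_mono ha_div hdiss T hε).mono
    fun t ht => ?_
  exact Real.iSup_le (fun s => Real.iSup_le (ht s) hε.le) hε.le

/-- If `a` is non-increasing with divergent integral, and the velocity of a solution is
Lipschitz with finite weighted kinetic energy, then the velocity is arbitrarily small on
arbitrarily long time intervals, infinitely often. -/
theorem stmt_2
    {H : Type*} [NormedAddCommGroup H] [InnerProductSpace ℝ H] [CompleteSpace H]
    (a : ℝ → ℝ) (ha_nonneg : ∀ t ≥ (0:ℝ), 0 ≤ a t) (ha_mono : AntitoneOn a (Set.Ici 0))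
    (ha_div : ¬ MeasureTheory.IntegrableOn a (Set.Ici 0))
    (G : H → ℝ) (G' : H → H) (hG : ∀ y, HasGradientAt G (G' y) y)
    (x : ℝ → H) (hx : ContDiff ℝ 2 x)
    (hode : ∀ t ≥ (0:ℝ), deriv (deriv x) t + a t • deriv x t + G' (x t) = 0)
    (K : NNReal) (hlip : LipschitzWith K (deriv x))
    (hdiss : MeasureTheory.IntegrableOn (fun t => a t * ‖deriv x t‖^2) (Set.Ici 0)) :
    ∀ T > (0:ℝ),
      Filter.liminf (fun t => ⨆ s ∈ Set.Icc t (t + T), ‖deriv x s‖) Filter.atTop = 0 :=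
  stmt_2_general a ha_nonneg ha_mono ha_div x K hlip hdiss
end

section
/- Let $x$ be a solution of $\ddot{x}+a\dot{x}+g(x)=0$ on $[T_0,T_1]$ with $a:\mathbb{R}_+\to\mathbb{R}_+$ non-increasing and $g=\nabla G$ Lipschitz with constant $L$ on $x([T_0,T_1])$. If $|\dot{x}(t)|\le\varepsilon$ for all $t\in[T_0,T_1]$, then for every $\delta\in(0,\tfrac{T_1-T_0}{2}]$ and every $t\in[T_0+\delta,T_1-\delta]$ one has $|g(x(t))|\le\big(\tfrac{2}{\delta}+a(T_0)+\tfrac{L\delta}{2}\big)\varepsilon$. -/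
/-!
Integrate the equation over `[t, t + δ]`: the function `h s = ẋ s + (s - t) • g (x t)` has
derivative `g (x t) - g (x s) - a s • ẋ s`, whose norm is at most `a t * ε + L * ε * (s - t)`
because `‖x s - x t‖ ≤ ε (s - t)`. Hence `‖h (t + δ) - h t‖ ≤ a t * ε * δ + L * ε * δ² / 2`,
while `h (t + δ) - h t = δ • g (x t) + (ẋ (t + δ) - ẋ t)` and the last term has norm `≤ 2 ε`.
-/

open Set

theorem norm_sub_le_of_norm_deriv_le_affine {E : Type*} [NormedAddCommGroup E]
    [NormedSpace ℝ E] {f f' : ℝ → E} {t u c K : ℝ} (htu : t ≤ u)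
    (hf : ContinuousOn f (Icc t u)) (hf' : ∀ s ∈ Ico t u, HasDerivWithinAt f (f' s) (Ici s) s)
    (bound : ∀ s ∈ Ico t u, ‖f' s‖ ≤ c + K * (s - t)) :
    ‖f u - f t‖ ≤ c * (u - t) + K * (u - t) ^ 2 / 2 := by
  have hB : ∀ s, HasDerivAt (fun s ↦ c * (s - t) + K * (s - t) ^ 2 / 2) (c + K * (s - t)) s := by
    intro s
    refine ((((hasDerivAt_id' s).sub_const t).const_mul c).add
      ((((hasDerivAt_id' s).sub_const t).pow 2).const_mul K |>.div_const 2)).congr_deriv ?_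
    ring
  refine image_norm_le_of_norm_deriv_right_le_deriv_boundary (f := fun s ↦ f s - f t)
    (hf.sub continuousOn_const) (fun s hs ↦ (hf' s hs).sub_const (f t)) ?_ hB bound
    ⟨htu, le_rfl⟩
  simp

theorem mul_norm_le_of_damped_ode {E : Type*} [NormedAddCommGroup E] [NormedSpace ℝ E]
    {a : ℝ → ℝ} {g : E → E} {x : ℝ → E} {L ε t u : ℝ} (htu : t ≤ u)
    (ha_nonneg : ∀ s ∈ Icc t u, 0 ≤ a s) (ha_mono : AntitoneOn a (Icc t u)) (hL : 0 ≤ L)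
    (hx : ContDiff ℝ 2 x) (hlip : ∀ s ∈ Icc t u, ‖g (x s) - g (x t)‖ ≤ L * ‖x s - x t‖)
    (hode : ∀ s ∈ Icc t u, deriv (deriv x) s + a s • deriv x s + g (x s) = 0)
    (hε : ∀ s ∈ Icc t u, ‖deriv x s‖ ≤ ε) :
    (u - t) * ‖g (x t)‖ ≤ 2 * ε + a t * ε * (u - t) + L * ε * (u - t) ^ 2 / 2 := by
  have htmem : t ∈ Icc t u := ⟨le_rfl, htu⟩
  have humem : u ∈ Icc t u := ⟨htu, le_rfl⟩
  have hx' : Differentiable ℝ x := hx.differentiable two_ne_zero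
  have hx'' : Differentiable ℝ (deriv x) := hx.differentiable_deriv_two
  have hdisp : ∀ s ∈ Icc t u, ‖x s - x t‖ ≤ ε * (s - t) :=
    norm_image_sub_le_of_norm_deriv_le_segment' (fun s _ ↦ (hx' s).hasDerivAt.hasDerivWithinAt)
      (fun s hs ↦ hε s (Ico_subset_Icc_self hs))
  set h : ℝ → E := fun s ↦ deriv x s + (s - t) • g (x t)
  have hh : ∀ s, HasDerivAt h (deriv (deriv x) s + g (x t)) s := fun s ↦ by
    refine ((hx'' s).hasDerivAt.add
      (((hasDerivAt_id s).sub_const t).smul_const (g (x t)))).congr_deriv ?_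
    simp
  have hh_bound : ∀ s ∈ Ico t u, ‖deriv (deriv x) s + g (x t)‖ ≤ a t * ε + L * ε * (s - t) := by
    intro s hs
    have hs' : s ∈ Icc t u := Ico_subset_Icc_self hs
    have hdamp : ‖a s • deriv x s‖ ≤ a t * ε := by
      rw [norm_smul, Real.norm_of_nonneg (ha_nonneg s hs')]
      exact mul_le_mul (ha_mono htmem hs' hs.1) (hε s hs') (norm_nonneg _)
        (ha_nonneg t htmem)
    have hforce : ‖g (x s) - g (x t)‖ ≤ L * ε * (s - t) := by
      calc ‖g (x s) - g (x t)‖ ≤ L * ‖x s - x t‖ := hlip s hs'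
        _ ≤ L * (ε * (s - t)) := mul_le_mul_of_nonneg_left (hdisp s hs') hL
        _ = L * ε * (s - t) := by ring
    calc ‖deriv (deriv x) s + g (x t)‖ = ‖-(a s • deriv x s) - (g (x s) - g (x t))‖ := by
          congr 1
          linear_combination (norm := module) hode s hs'
      _ ≤ ‖a s • deriv x s‖ + ‖g (x s) - g (x t)‖ := by
          simpa only [norm_neg] using norm_sub_le (-(a s • deriv x s)) (g (x s) - g (x t))
      _ ≤ a t * ε + L * ε * (s - t) := add_le_add hdamp hforce
  have hh_diff : ‖h u - h t‖ ≤ a t * ε * (u - t) + L * ε * (u - t) ^ 2 / 2 :=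
    norm_sub_le_of_norm_deriv_le_affine htu (fun s _ ↦ (hh s).continuousAt.continuousWithinAt)
      (fun s _ ↦ (hh s).hasDerivWithinAt) hh_bound
  have hsplit : (u - t) • g (x t) = (h u - h t) - (deriv x u - deriv x t) := by
    simp only [h, sub_self, zero_smul, add_zero]
    abel
  calc (u - t) * ‖g (x t)‖ = ‖(h u - h t) - (deriv x u - deriv x t)‖ := by
        rw [← hsplit, norm_smul, Real.norm_of_nonneg (sub_nonneg.mpr htu)]
    _ ≤ ‖h u - h t‖ + (‖deriv x u‖ + ‖deriv x t‖) :=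
        (norm_sub_le _ _).trans (add_le_add_right (norm_sub_le _ _) _)
    _ ≤ 2 * ε + a t * ε * (u - t) + L * ε * (u - t) ^ 2 / 2 := by
        linarith [hε u humem, hε t htmem]

theorem stmt_3_general
    {H : Type*} [NormedAddCommGroup H] [InnerProductSpace ℝ H]
    (a : ℝ → ℝ) (ha_nonneg : ∀ t ≥ (0:ℝ), 0 ≤ a t) (ha_mono : AntitoneOn a (Set.Ici 0))
    (g : H → H) (L : ℝ) (hL : 0 ≤ L)
    (T₀ T₁ : ℝ) (hT₀ : 0 ≤ T₀)
    (x : ℝ → H) (hx : ContDiff ℝ 2 x)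
    (hlip : ∀ s ∈ Set.Icc T₀ T₁, ∀ t ∈ Set.Icc T₀ T₁,
      ‖g (x s) - g (x t)‖ ≤ L * ‖x s - x t‖)
    (hode : ∀ t ∈ Set.Icc T₀ T₁, deriv (deriv x) t + a t • deriv x t + g (x t) = 0)
    (ε : ℝ) (hε : ∀ t ∈ Set.Icc T₀ T₁, ‖deriv x t‖ ≤ ε) :
    ∀ δ, 0 < δ → δ ≤ (T₁ - T₀) / 2 →
      ∀ t ∈ Set.Icc (T₀ + δ) (T₁ - δ),
        ‖g (x t)‖ ≤ (2 / δ + a T₀ + L * δ / 2) * ε := by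
  intro δ hδ _ t ⟨ht₀, ht₁⟩
  have hsub : Icc t (t + δ) ⊆ Icc T₀ T₁ := Icc_subset_Icc (by linarith) (by linarith)
  have hsub₀ : Icc t (t + δ) ⊆ Ici 0 := fun s hs ↦ hT₀.trans (hsub hs).1
  have htmem : t ∈ Icc T₀ T₁ := hsub ⟨le_rfl, by linarith⟩
  have hest := mul_norm_le_of_damped_ode (by linarith) (fun s hs ↦ ha_nonneg s (hsub₀ hs))
    (ha_mono.mono hsub₀) hL hx (fun s hs ↦ hlip s (hsub hs) t htmem)
    (fun s hs ↦ hode s (hsub hs)) (fun s hs ↦ hε s (hsub hs))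
  rw [add_sub_cancel_left] at hest
  have ha_t : a t ≤ a T₀ := ha_mono hT₀ (hT₀.trans htmem.1) htmem.1
  have hε₀ : 0 ≤ ε := (norm_nonneg _).trans (hε t htmem)
  rw [← mul_le_mul_iff_of_pos_left hδ]
  calc δ * ‖g (x t)‖ ≤ 2 * ε + a t * ε * δ + L * ε * δ ^ 2 / 2 := hest
    _ ≤ 2 * ε + a T₀ * ε * δ + L * ε * δ ^ 2 / 2 := by gcongr
    _ = δ * ((2 / δ + a T₀ + L * δ / 2) * ε) := by field_simp

/-- If the velocity is at most `ε` on `[T₀, T₁]`, then `‖g(x(t))‖` is proportionally small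
on the shrunk interval `[T₀+δ, T₁-δ]`. -/
theorem stmt_3
    {H : Type*} [NormedAddCommGroup H] [InnerProductSpace ℝ H] [CompleteSpace H]
    (a : ℝ → ℝ) (ha_nonneg : ∀ t ≥ (0:ℝ), 0 ≤ a t) (ha_mono : AntitoneOn a (Set.Ici 0))
    (g : H → H) (L : ℝ) (hL : 0 ≤ L)
    (T₀ T₁ : ℝ) (hT₀ : 0 ≤ T₀) (hT : T₀ < T₁)
    (x : ℝ → H) (hx : ContDiff ℝ 2 x)
    (hlip : ∀ s ∈ Set.Icc T₀ T₁, ∀ t ∈ Set.Icc T₀ T₁,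
      ‖g (x s) - g (x t)‖ ≤ L * ‖x s - x t‖)
    (hode : ∀ t ∈ Set.Icc T₀ T₁, deriv (deriv x) t + a t • deriv x t + g (x t) = 0)
    (ε : ℝ) (hε : ∀ t ∈ Set.Icc T₀ T₁, ‖deriv x t‖ ≤ ε) :
    ∀ δ, 0 < δ → δ ≤ (T₁ - T₀) / 2 →
      ∀ t ∈ Set.Icc (T₀ + δ) (T₁ - δ),
        ‖g (x t)‖ ≤ (2 / δ + a T₀ + L * δ / 2) * ε :=
  stmt_3_general a ha_nonneg ha_mono g L hL T₀ T₁ hT₀ x hx hlip hode ε hε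
end

section
/- Let $a:\mathbb{R}_+\to\mathbb{R}_+$ be continuous, $G:H\to\mathbb{R}$ be $C^1$ with $\inf G>-\infty$, and let $x$ be a solution of $\ddot{x}+a\dot{x}+\nabla G(x)=0$. Then for all $t\ge 0$, $\mathcal{E}(t)-\inf G\ge (\mathcal{E}(0)-\inf G)\,e^{-2\int_0^t a(s)\,ds}$, where $\mathcal{E}(t)=\tfrac12|\dot{x}(t)|^2+G(x(t))$. -/
open Set

/-! Along a solution the energy `E` dissipates at rate `a ‖ẋ‖²`, and `‖ẋ‖² / 2 ≤ E - inf G`, so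
`f = E - inf G` satisfies the linear differential inequality `f' ≥ -2 a f`. Grönwall's argument,
i.e. monotonicity of `f · exp (2 ∫₀ a)`, gives the bound. -/

theorem mul_exp_integral_le_of_hasDerivAt {f f' b : ℝ → ℝ} (hb : Continuous b)
    (hf : ∀ u ≥ (0:ℝ), HasDerivAt f (f' u) u) (hf' : ∀ u ≥ (0:ℝ), b u * f u ≤ f' u)
    {t : ℝ} (ht : 0 ≤ t) :
    f 0 * Real.exp (∫ s in (0:ℝ)..t, b s) ≤ f t := by
  set B : ℝ → ℝ := fun u => ∫ s in (0:ℝ)..u, b s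
  have hB : ∀ u, HasDerivAt B (b u) u := fun u =>
    intervalIntegral.integral_hasDerivAt_right (hb.intervalIntegrable _ _)
      hb.aestronglyMeasurable.stronglyMeasurableAtFilter hb.continuousAt
  have hg : ∀ u ≥ (0:ℝ), HasDerivAt (fun s => f s * Real.exp (-B s))
      ((f' u - b u * f u) * Real.exp (-B u)) u := fun u hu =>
    ((hf u hu).mul (hB u).neg.exp).congr_deriv (by simp only [Pi.neg_apply]; ring)
  have hmono : MonotoneOn (fun s => f s * Real.exp (-B s)) (Ici 0) := by
    refine monotoneOn_of_hasDerivWithinAt_nonneg (convex_Ici 0)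
      (fun u hu => (hg u hu).continuousAt.continuousWithinAt)
      (fun u hu => (hg u (le_of_lt (by simpa using hu))).hasDerivWithinAt) ?_
    intro u hu
    have hu : 0 ≤ u := le_of_lt (by simpa using hu)
    exact mul_nonneg (sub_nonneg.mpr (hf' u hu)) (Real.exp_pos _).le
  have h0t : f 0 ≤ f t * Real.exp (-B t) := by
    simpa [B] using hmono self_mem_Ici ht ht
  calc f 0 * Real.exp (B t) ≤ f t * Real.exp (-B t) * Real.exp (B t) := by gcongr
    _ = f t := by rw [mul_assoc, ← Real.exp_add, neg_add_cancel, Real.exp_zero, mul_one]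

theorem hasDerivAt_half_norm_sq_add_comp {H : Type*} [NormedAddCommGroup H]
    [InnerProductSpace ℝ H] [CompleteSpace H] {G : H → ℝ} {x v : ℝ → H} {w g : H} {t : ℝ}
    (hx : HasDerivAt x (v t) t) (hv : HasDerivAt v w t) (hG : HasGradientAt G g (x t)) :
    HasDerivAt (fun s => 1 / 2 * ‖v s‖ ^ 2 + G (x s)) (inner ℝ (w + g) (v t)) t := by
  have hGx := hG.hasFDerivAt.comp_hasDerivAt t hx
  simp only [InnerProductSpace.toDual_apply_apply] at hGx
  refine (hv.norm_sq.const_mul (1 / 2)).add hGx |>.congr_deriv ?_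
  rw [inner_add_left, real_inner_comm]
  ring

theorem stmt_6_general
    {H : Type*} [NormedAddCommGroup H] [InnerProductSpace ℝ H] [CompleteSpace H]
    (a : ℝ → ℝ) (ha_cont : Continuous a) (ha_nonneg : ∀ t ≥ (0:ℝ), 0 ≤ a t)
    (G : H → ℝ) (G' : H → H) (hG : ∀ y, HasGradientAt G (G' y) y)
    (hGbdd : BddBelow (Set.range G))
    (x : ℝ → H) (hx : ContDiff ℝ 2 x)
    (hode : ∀ t ≥ (0:ℝ), deriv (deriv x) t + a t • deriv x t + G' (x t) = 0)
    (E : ℝ → ℝ) (hE : ∀ t, E t = (1/2) * ‖deriv x t‖^2 + G (x t)) :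
    ∀ t ≥ (0:ℝ),
      E t - sInf (Set.range G) ≥
        (E 0 - sInf (Set.range G)) * Real.exp (-2 * ∫ s in (0:ℝ)..t, a s) := by
  intro t ht
  set m := sInf (Set.range G)
  have hxd : Differentiable ℝ x := hx.differentiable two_ne_zero
  have hx'd : Differentiable ℝ (deriv x) := hx.differentiable_deriv_two
  have hEderiv : ∀ u ≥ (0:ℝ), HasDerivAt (fun s => E s - m) (-(a u * ‖deriv x u‖ ^ 2)) u := by
    intro u hu
    have hw : deriv (deriv x) u + G' (x u) = -(a u • deriv x u) :=
      eq_neg_of_add_eq_zero_left (by rw [add_right_comm]; exact hode u hu)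
    have hEu := hasDerivAt_half_norm_sq_add_comp (hxd u).hasDerivAt (hx'd u).hasDerivAt (hG (x u))
    rw [hw, inner_neg_left, real_inner_smul_left, real_inner_self_eq_norm_sq] at hEu
    exact (hEu.congr_of_eventuallyEq (.of_forall fun s => hE s)).sub_const m
  have hbound : ∀ u ≥ (0:ℝ), -2 * a u * (E u - m) ≤ -(a u * ‖deriv x u‖ ^ 2) := by
    intro u hu
    have hGm : m ≤ G (x u) := csInf_le hGbdd ⟨x u, rfl⟩
    have := mul_le_mul_of_nonneg_left hGm (ha_nonneg u hu)
    rw [hE u]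
    nlinarith
  have := mul_exp_integral_le_of_hasDerivAt (continuous_const.mul ha_cont) hEderiv hbound ht
  simpa [intervalIntegral.integral_const_mul] using this

/-- Lower bound on the energy decay:
`E(t) - inf G ≥ (E(0) - inf G) e^{-2∫₀ᵗ a}` for all `t ≥ 0`. -/
theorem stmt_6
    {H : Type*} [NormedAddCommGroup H] [InnerProductSpace ℝ H] [CompleteSpace H]
    (a : ℝ → ℝ) (ha_cont : Continuous a) (ha_nonneg : ∀ t ≥ (0:ℝ), 0 ≤ a t)
    (G : H → ℝ) (G' : H → H) (hG : ∀ y, HasGradientAt G (G' y) y)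
    (hG'cont : Continuous G')
    (hGbdd : BddBelow (Set.range G))
    (x : ℝ → H) (hx : ContDiff ℝ 2 x)
    (hode : ∀ t ≥ (0:ℝ), deriv (deriv x) t + a t • deriv x t + G' (x t) = 0)
    (E : ℝ → ℝ) (hE : ∀ t, E t = (1/2) * ‖deriv x t‖^2 + G (x t)) :
    ∀ t ≥ (0:ℝ),
      E t - sInf (Set.range G) ≥
        (E 0 - sInf (Set.range G)) * Real.exp (-2 * ∫ s in (0:ℝ)..t, a s) :=
  stmt_6_general a ha_cont ha_nonneg G G' hG hGbdd x hx hode E hE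
end

section
/- If $a:\mathbb{R}_+\to\mathbb{R}_+$ and $\mathcal{E}:\mathbb{R}_+\to\mathbb{R}$ are non-increasing with $\mathcal{E}\ge m$, $\int_0^\infty a(s)(\mathcal{E}(s)-m)\,ds<\infty$, and there exists $c>0$ such that $a(t)\ge c/t$ for all large $t$, then $t\,a(t)(\mathcal{E}(t)-m)\to 0$ as $t\to\infty$; in particular $\mathcal{E}(t)-m=o\big(1/(t\,a(t))\big)$. -/
/-!
Put `g = a (E - m)`: it is non-increasing and integrable on `[0, ∞)`. For a non-increasing `g`,
`∫_t^{2t} g ≤ t g(t) ≤ 2 ∫_{t/2}^t g`, and both integrals are differences of tails of a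
convergent integral, hence tend to `0`; so `t g(t) → 0`.
-/

open Set Filter MeasureTheory Topology

theorem AntitoneOn.sub_mul_le_intervalIntegral {f : ℝ → ℝ} {x y : ℝ}
    (hf : AntitoneOn f (Icc x y)) (hxy : x ≤ y) :
    (y - x) * f y ≤ ∫ t in x..y, f t := by
  have hfi : IntervalIntegrable f volume x y := (uIcc_of_le hxy ▸ hf).intervalIntegrable
  calc (y - x) * f y = ∫ _ in x..y, f y := by simp
    _ ≤ ∫ t in x..y, f t := intervalIntegral.integral_mono_on hxy intervalIntegrable_const hfi
        fun t ht => hf ht (right_mem_Icc.2 hxy) ht.2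

theorem AntitoneOn.intervalIntegral_le_sub_mul {f : ℝ → ℝ} {x y : ℝ}
    (hf : AntitoneOn f (Icc x y)) (hxy : x ≤ y) :
    ∫ t in x..y, f t ≤ (y - x) * f x := by
  have hfi : IntervalIntegrable f volume x y := (uIcc_of_le hxy ▸ hf).intervalIntegrable
  calc ∫ t in x..y, f t ≤ ∫ _ in x..y, f x :=
        intervalIntegral.integral_mono_on hxy hfi intervalIntegrable_const
          fun t ht => hf (left_mem_Icc.2 hxy) ht ht.1
    _ = (y - x) * f x := by simp

theorem tendsto_intervalIntegral_zero_of_integrableOn_Ioi {ι : Type*} {l : Filter ι}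
    [l.IsCountablyGenerated] {f : ℝ → ℝ} {b : ℝ} (hf : IntegrableOn f (Ioi b))
    {u v : ι → ℝ} (hu : Tendsto u l atTop) (hv : Tendsto v l atTop) :
    Tendsto (fun i => ∫ t in u i..v i, f t) l (𝓝 0) := by
  have hlim := (tendsto_integral_Ioi_zero (f := f) (μ := volume) hu).sub
    (tendsto_integral_Ioi_zero (f := f) (μ := volume) hv)
  rw [sub_zero] at hlim
  refine hlim.congr' ?_
  filter_upwards [hu.eventually_ge_atTop b, hv.eventually_ge_atTop b] with i hui hvi
  exact intervalIntegral.integral_Ioi_sub_Ioi' (hf.mono_set (Ioi_subset_Ioi hui))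
    (hf.mono_set (Ioi_subset_Ioi hvi))

theorem AntitoneOn.tendsto_mul_self_zero_of_integrableOn {f : ℝ → ℝ} {b : ℝ}
    (hf : AntitoneOn f (Ici b)) (hfi : IntegrableOn f (Ioi b)) :
    Tendsto (fun t => t * f t) atTop (𝓝 0) := by
  have h_half : Tendsto (fun t : ℝ => t / 2) atTop atTop := tendsto_id.atTop_div_const two_pos
  have h_double : Tendsto (fun t : ℝ => 2 * t) atTop atTop := tendsto_id.const_mul_atTop two_pos
  have lower := tendsto_intervalIntegral_zero_of_integrableOn_Ioi hfi tendsto_id h_double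
  have upper :=
    (tendsto_intervalIntegral_zero_of_integrableOn_Ioi hfi h_half tendsto_id).const_mul 2
  rw [mul_zero] at upper
  refine tendsto_of_tendsto_of_tendsto_of_le_of_le' lower upper ?_ ?_
  · filter_upwards [eventually_ge_atTop b, eventually_ge_atTop 0] with t hb h0
    have := (hf.mono (Icc_subset_Ici_self.trans (Ici_subset_Ici.2 hb))).intervalIntegral_le_sub_mul
      (by linarith : t ≤ 2 * t)
    show ∫ s in t..2 * t, f s ≤ t * f t
    linarith
  · filter_upwards [eventually_ge_atTop (2 * b), eventually_ge_atTop 0] with t hb h0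
    have := (hf.mono (Icc_subset_Ici_self.trans (Ici_subset_Ici.2 (by linarith : b ≤ t / 2))))
      |>.sub_mul_le_intervalIntegral (by linarith : t / 2 ≤ t)
    show t * f t ≤ 2 * ∫ s in t / 2..t, f s
    linarith

theorem stmt_8_general
    (a : ℝ → ℝ) (ha_nonneg : ∀ t ≥ (0:ℝ), 0 ≤ a t) (ha_mono : AntitoneOn a (Set.Ici 0))
    (E : ℝ → ℝ) (hE_mono : AntitoneOn E (Set.Ici 0))
    (m : ℝ) (hE_ge : ∀ t ≥ (0:ℝ), m ≤ E t)
    (hsum : MeasureTheory.IntegrableOn (fun s => a s * (E s - m)) (Set.Ici 0)) :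
    Filter.Tendsto (fun t => t * a t * (E t - m)) Filter.atTop (nhds 0) := by
  have hg_anti : AntitoneOn (fun s => a s * (E s - m)) (Ici 0) := fun x hx y hy hxy =>
    mul_le_mul (ha_mono hx hy hxy) (sub_le_sub_right (hE_mono hx hy hxy) m)
      (sub_nonneg.2 (hE_ge y hy)) (ha_nonneg x hx)
  simpa only [mul_assoc] using
    hg_anti.tendsto_mul_self_zero_of_integrableOn (hsum.mono_set Ioi_subset_Ici_self)

/-- Rate of convergence of the energy: if `a(t) ≥ c/t` for large `t`, then
`t a(t) (E(t) - m) → 0`, i.e. `E(t) - m = o(1/(t a(t)))`. -/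
theorem stmt_8
    (a : ℝ → ℝ) (ha_nonneg : ∀ t ≥ (0:ℝ), 0 ≤ a t) (ha_mono : AntitoneOn a (Set.Ici 0))
    (E : ℝ → ℝ) (hE_mono : AntitoneOn E (Set.Ici 0))
    (m : ℝ) (hE_ge : ∀ t ≥ (0:ℝ), m ≤ E t)
    (hsum : MeasureTheory.IntegrableOn (fun s => a s * (E s - m)) (Set.Ici 0))
    (c : ℝ) (hc : 0 < c) (t₀ : ℝ) (ht₀ : 0 < t₀) (ha_low : ∀ t ≥ t₀, c / t ≤ a t) :
    Filter.Tendsto (fun t => t * a t * (E t - m)) Filter.atTop (nhds 0) :=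
  stmt_8_general a ha_nonneg ha_mono E hE_mono m hE_ge hsum
end

section
/- Let $a:(0,\infty)\to\mathbb{R}_+$ be continuous with $\int_0^\infty e^{-\int_0^t a(s)\,ds}\,dt=\infty$, and let $p\in C^2([t_0,\infty),\mathbb{R})$ satisfy $\ddot{p}(t)+a(t)\dot{p}(t)\le 0$ for all $t\ge t_0$. Then either $\lim_{t\to\infty}p(t)=-\infty$, or $\dot{p}(t)\ge 0$ for all $t\ge t_0$. -/
/-!
Put `q = ṗ` and `A(t) = ∫₀ᵗ a`. The inequality says exactly that `(e^A q)' = e^A (q̇ + a q) ≤ 0`,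
so `e^A q` is nonincreasing on `[t₀, ∞)`. If `q(t₁) < 0` for some `t₁ ≥ t₀`, then
`q(t) ≤ e^{A(t₁)} q(t₁) e^{-A(t)}` for `t ≥ t₁`, and integrating,
`p(t) ≤ p(t₁) + e^{A(t₁)} q(t₁) ∫_{t₁}^t e^{-A}`, which tends to `-∞` because `e^{-A}` is
not integrable on a half-line.
-/

open Set Filter MeasureTheory

lemma antitoneOn_Ici_of_hasDerivAt_nonpos {f f' : ℝ → ℝ} {t₀ : ℝ}
    (hf : ∀ t, HasDerivAt f (f' t) t) (hf' : ∀ t ≥ t₀, f' t ≤ 0) : AntitoneOn f (Ici t₀) :=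
  antitoneOn_of_hasDerivWithinAt_nonpos (convex_Ici t₀)
    (continuous_iff_continuousAt.2 fun t ↦ (hf t).continuousAt).continuousOn (fun t _ ↦ (hf t).hasDerivWithinAt)
    fun t ht ↦ hf' t (by rw [interior_Ici] at ht; exact ht.le)

lemma antitoneOn_exp_mul_of_deriv_add_mul_nonpos {A a q q' : ℝ → ℝ} {t₀ : ℝ}
    (hA : ∀ t, HasDerivAt A (a t) t) (hq : ∀ t, HasDerivAt q (q' t) t)
    (hineq : ∀ t ≥ t₀, q' t + a t * q t ≤ 0) :
    AntitoneOn (fun t ↦ Real.exp (A t) * q t) (Ici t₀) := by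
  refine antitoneOn_Ici_of_hasDerivAt_nonpos (fun t ↦ ((hA t).exp.mul (hq t))) fun t ht ↦ ?_
  have hfactor : Real.exp (A t) * a t * q t + Real.exp (A t) * q' t
      = Real.exp (A t) * (q' t + a t * q t) := by ring
  rw [hfactor]
  exact mul_nonpos_of_nonneg_of_nonpos (Real.exp_pos _).le (hineq t ht)

lemma tendsto_intervalIntegral_atTop_of_not_integrableOn {f : ℝ → ℝ} {b c : ℝ}
    (hf : Continuous f) (hf_nonneg : ∀ t, 0 ≤ f t) (hf_int : ¬ IntegrableOn f (Ici c)) :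
    Tendsto (fun t ↦ ∫ s in b..t, f s) atTop atTop := by
  have hderiv (t : ℝ) : HasDerivAt (fun t ↦ ∫ s in b..t, f s) (f t) t :=
    (hf.integral_hasStrictDerivAt b t).hasDerivAt
  refine tendsto_atTop_atTop_of_monotone' (monotone_of_hasDerivAt_nonneg hderiv hf_nonneg) ?_
  rintro ⟨M, hM⟩
  have hIoi : IntegrableOn f (Ioi b) :=
    integrableOn_Ioi_of_intervalIntegral_norm_bounded M b (fun _ ↦ hf.integrableOn_Ioc)
      tendsto_id (Eventually.of_forall fun t ↦ by
        simpa only [id, Real.norm_of_nonneg (hf_nonneg _)] using hM (mem_range_self t))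
  exact hf_int (integrableOn_Ici_iff_integrableAtFilter_atTop.2
    ⟨⟨Ioi b, Ioi_mem_atTop b, hIoi⟩, hf.locallyIntegrable.locallyIntegrableOn _⟩)

lemma tendsto_atBot_of_hasDerivAt_le {f f' g g' : ℝ → ℝ} {t₀ : ℝ}
    (hf : ∀ t, HasDerivAt f (f' t) t) (hg : ∀ t, HasDerivAt g (g' t) t)
    (hle : ∀ t ≥ t₀, f' t ≤ g' t) (hg_bot : Tendsto g atTop atBot) :
    Tendsto f atTop atBot := by
  have hanti : AntitoneOn (fun t ↦ f t - g t) (Ici t₀) :=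
    antitoneOn_Ici_of_hasDerivAt_nonpos (fun t ↦ (hf t).sub (hg t))
      fun t ht ↦ sub_nonpos.2 (hle t ht)
  refine tendsto_atBot_mono' atTop ?_ (tendsto_atBot_add_const_left _ (f t₀ - g t₀) hg_bot)
  filter_upwards [eventually_ge_atTop t₀] with t ht
  have := hanti (le_refl t₀) ht ht
  linarith

theorem stmt_9_general
    (a : ℝ → ℝ) (ha_cont : Continuous a)
    (ha_div : ¬ MeasureTheory.IntegrableOn
      (fun t => Real.exp (-∫ s in (0:ℝ)..t, a s)) (Set.Ici 0))
    (t₀ : ℝ)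
    (p : ℝ → ℝ) (hp : ContDiff ℝ 2 p)
    (hineq : ∀ t ≥ t₀, deriv (deriv p) t + a t * deriv p t ≤ 0) :
    Filter.Tendsto p Filter.atTop Filter.atBot ∨ ∀ t ≥ t₀, 0 ≤ deriv p t := by
  refine or_iff_not_imp_right.2 fun hneg ↦ ?_
  push Not at hneg
  obtain ⟨t₁, ht₁, hq₁⟩ := hneg
  set A : ℝ → ℝ := fun t ↦ ∫ s in (0:ℝ)..t, a s
  have hA (t : ℝ) : HasDerivAt A (a t) t := (ha_cont.integral_hasStrictDerivAt 0 t).hasDerivAt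
  have hp' (t : ℝ) : HasDerivAt p (deriv p t) t :=
    (hp.differentiable (by norm_num) t).hasDerivAt
  have hq_diff : Differentiable ℝ (deriv p) := by
    simpa only [iteratedDeriv_one] using hp.differentiable_iteratedDeriv 1 (by norm_num)
  have hanti := antitoneOn_exp_mul_of_deriv_add_mul_nonpos hA (fun t ↦ (hq_diff t).hasDerivAt)
    hineq
  set c := Real.exp (A t₁) * deriv p t₁
  have hc : c < 0 := mul_neg_of_pos_of_neg (Real.exp_pos _) hq₁
  have hE : Continuous fun t ↦ Real.exp (-A t) :=
    (continuous_iff_continuousAt.2 fun t ↦ (hA t).continuousAt).neg.rexp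
  have hderiv_le (t : ℝ) (ht : t ≥ t₁) : deriv p t ≤ c * Real.exp (-A t) := calc
    deriv p t = Real.exp (-A t) * (Real.exp (A t) * deriv p t) := by
      rw [← mul_assoc, ← Real.exp_add, neg_add_cancel, Real.exp_zero, one_mul]
    _ ≤ Real.exp (-A t) * c :=
      mul_le_mul_of_nonneg_left (hanti ht₁ (ht₁.trans ht) ht) (Real.exp_pos _).le
    _ = c * Real.exp (-A t) := mul_comm _ _
  exact tendsto_atBot_of_hasDerivAt_le hp'
    (fun t ↦ ((hE.integral_hasStrictDerivAt t₁ t).hasDerivAt).const_mul c) hderiv_le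
    ((tendsto_const_mul_atBot_of_neg hc).2 <|
      tendsto_intervalIntegral_atTop_of_not_integrableOn hE (fun _ ↦ (Real.exp_pos _).le) ha_div)

/-- Differential inequality `p̈ + a ṗ ≤ 0` under `∫₀^∞ e^{-∫₀ᵗ a} dt = ∞`:
either `p(t) → -∞` or `ṗ ≥ 0` on `[t₀, ∞)`. -/
theorem stmt_9
    (a : ℝ → ℝ) (ha_cont : Continuous a) (ha_nonneg : ∀ t ≥ (0:ℝ), 0 ≤ a t)
    (ha_div : ¬ MeasureTheory.IntegrableOn
      (fun t => Real.exp (-∫ s in (0:ℝ)..t, a s)) (Set.Ici 0))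
    (t₀ : ℝ) (ht₀ : 0 ≤ t₀)
    (p : ℝ → ℝ) (hp : ContDiff ℝ 2 p)
    (hineq : ∀ t ≥ t₀, deriv (deriv p) t + a t * deriv p t ≤ 0) :
    Filter.Tendsto p Filter.atTop Filter.atBot ∨ ∀ t ≥ t₀, 0 ≤ deriv p t :=
  stmt_9_general a ha_cont ha_div t₀ p hp hineq
end

section
/- Let $a:\mathbb{R}_+\to\mathbb{R}_+$ be continuous with $\int_0^\infty e^{-\int_0^t a(s)\,ds}\,dt=\infty$, and let $p\in C^2([t_0,\infty),\mathbb{R})$ satisfy $\ddot{p}(t)+a(t)\dot{p}(t)=0$ for all $t\ge t_0$. Then either $\lim_{t\to\infty}|p(t)|=\infty$, or $p(t)=p(t_0)$ for all $t\ge t_0$. -/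
open Set Filter MeasureTheory

/-!
With the integrating factor `exp (∫₀ᵗ a)`, the equation gives `ṗ t = k * exp (-∫₀ᵗ a)` on
`[t₀, ∞)`, hence `p t = p t₀ + k * ∫_{t₀}^t exp (-∫₀ˢ a) ds`. The integrand is positive and not
integrable at infinity, so this integral tends to `∞`: `p` is constant when `k = 0` and
`|p t| → ∞` otherwise.
-/

lemma eq_add_integral_of_hasDerivAt_of_ge {f f' : ℝ → ℝ} {t₀ t : ℝ}
    (hf : ∀ s ≥ t₀, HasDerivAt f (f' s) s) (hf' : Continuous f') (ht : t₀ ≤ t) :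
    f t = f t₀ + ∫ s in t₀..t, f' s := by
  rw [intervalIntegral.integral_eq_sub_of_hasDerivAt
    (fun s hs => hf s (uIcc_of_le ht ▸ hs).1) (hf'.intervalIntegrable _ _)]
  ring

lemma exists_eq_mul_exp_neg_integral_of_deriv_add_mul_eq_zero {a v : ℝ → ℝ} {t₀ : ℝ}
    (ha : Continuous a) (hv : Differentiable ℝ v)
    (h : ∀ t ≥ t₀, deriv v t + a t * v t = 0) (c : ℝ) :
    ∃ k, ∀ t ≥ t₀, v t = k * Real.exp (-∫ s in c..t, a s) := by
  set A : ℝ → ℝ := fun t => ∫ s in c..t, a s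
  have hderiv_zero : ∀ t ≥ t₀, HasDerivAt (fun t => v t * Real.exp (A t)) 0 t := fun t ht =>
    ((hv t).hasDerivAt.mul (ha.integral_hasStrictDerivAt c t).hasDerivAt.exp).congr_deriv
      (by linear_combination Real.exp (A t) * h t ht)
  refine ⟨v t₀ * Real.exp (A t₀), fun t ht => ?_⟩
  have hconserved := eq_add_integral_of_hasDerivAt_of_ge hderiv_zero continuous_const ht
  rw [intervalIntegral.integral_zero, add_zero] at hconserved
  rw [← hconserved, mul_assoc, ← Real.exp_add, add_neg_cancel, Real.exp_zero, mul_one]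

lemma tendsto_intervalIntegral_atTop_of_not_integrableAtFilter {f : ℝ → ℝ} (t₀ : ℝ)
    (hf : Continuous f) (hf_nonneg : 0 ≤ f) (hf_int : ¬ IntegrableAtFilter f atTop) :
    Tendsto (fun t => ∫ s in t₀..t, f s) atTop atTop := by
  have hF : ∀ t, HasDerivAt (fun t => ∫ s in t₀..t, f s) (f t) t := fun t =>
    (hf.integral_hasStrictDerivAt t₀ t).hasDerivAt
  have hmono : Monotone fun t => ∫ s in t₀..t, f s :=
    monotone_of_deriv_nonneg (fun t => (hF t).differentiableAt)
      fun t => (hF t).deriv ▸ hf_nonneg t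
  refine tendsto_atTop_atTop_of_monotone hmono fun I => ?_
  by_contra! hbdd
  refine hf_int ⟨Ioi t₀, Ioi_mem_atTop t₀, ?_⟩
  refine integrableOn_Ioi_of_intervalIntegral_norm_bounded I t₀
    (fun _ => hf.integrableOn_Ioc) tendsto_id (.of_forall fun t => ?_)
  simpa only [id, Real.norm_of_nonneg (hf_nonneg _)] using (hbdd t).le

lemma tendsto_abs_const_add_const_mul_atTop {α : Type*} {l : Filter α} {F : α → ℝ}
    (hF : Tendsto F l atTop) (b : ℝ) {k : ℝ} (hk : k ≠ 0) :
    Tendsto (fun x => |b + k * F x|) l atTop := by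
  refine tendsto_atTop_mono (fun x => ?_)
    (tendsto_atTop_add_const_right _ (-|b|) (hF.const_mul_atTop (abs_pos.2 hk)))
  calc |k| * F x + -|b| ≤ |k * F x| - |b| := by
        rw [abs_mul, ← sub_eq_add_neg]; gcongr; exact le_abs_self _
    _ ≤ |b + k * F x| := by
        simpa only [abs_neg, sub_neg_eq_add, add_comm] using abs_sub_abs_le_abs_sub (k * F x) (-b)

theorem stmt_10_general
    (a : ℝ → ℝ) (ha_cont : Continuous a)
    (ha_div : ¬ MeasureTheory.IntegrableOn
      (fun t => Real.exp (-∫ s in (0:ℝ)..t, a s)) (Set.Ici 0))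
    (t₀ : ℝ)
    (p : ℝ → ℝ) (hp : ContDiff ℝ 2 p)
    (heq : ∀ t ≥ t₀, deriv (deriv p) t + a t * deriv p t = 0) :
    Filter.Tendsto (fun t => |p t|) Filter.atTop Filter.atTop ∨
    ∀ t ≥ t₀, p t = p t₀ := by
  set E : ℝ → ℝ := fun t => Real.exp (-∫ s in (0:ℝ)..t, a s)
  have hE : Continuous E :=
    (intervalIntegral.continuous_primitive (fun _ _ => ha_cont.intervalIntegrable _ _) 0).neg.rexp
  obtain ⟨k, hk⟩ := exists_eq_mul_exp_neg_integral_of_deriv_add_mul_eq_zero ha_cont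
    hp.differentiable_deriv_two heq 0
  have hrep : ∀ t ≥ t₀, p t = p t₀ + k * ∫ s in t₀..t, E s := fun t ht => by
    rw [← intervalIntegral.integral_const_mul]
    refine eq_add_integral_of_hasDerivAt_of_ge (fun s hs => ?_) (continuous_const.mul hE) ht
    exact hk s hs ▸ (hp.differentiable two_ne_zero s).hasDerivAt
  by_cases hk0 : k = 0
  · right
    simpa [hk0] using hrep
  · left
    have hE_int : ¬ IntegrableAtFilter E atTop := fun h =>
      ha_div (integrableOn_Ici_iff_integrableAtFilter_atTop.2
        ⟨h, hE.locallyIntegrable.locallyIntegrableOn _⟩)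
    have hF := tendsto_intervalIntegral_atTop_of_not_integrableAtFilter t₀ hE
      (fun t => (Real.exp_pos _).le) hE_int
    refine (tendsto_abs_const_add_const_mul_atTop hF (p t₀) hk0).congr' ?_
    filter_upwards [eventually_ge_atTop t₀] with t ht
    rw [hrep t ht]

/-- Linear equation `p̈ + a ṗ = 0` under `∫₀^∞ e^{-∫₀ᵗ a} dt = ∞`:
either `|p(t)| → ∞` or `p` is constant on `[t₀, ∞)`. -/
theorem stmt_10
    (a : ℝ → ℝ) (ha_cont : Continuous a) (ha_nonneg : ∀ t ≥ (0:ℝ), 0 ≤ a t)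
    (ha_div : ¬ MeasureTheory.IntegrableOn
      (fun t => Real.exp (-∫ s in (0:ℝ)..t, a s)) (Set.Ici 0))
    (t₀ : ℝ) (ht₀ : 0 ≤ t₀)
    (p : ℝ → ℝ) (hp : ContDiff ℝ 2 p)
    (heq : ∀ t ≥ t₀, deriv (deriv p) t + a t * deriv p t = 0) :
    Filter.Tendsto (fun t => |p t|) Filter.atTop Filter.atTop ∨
    ∀ t ≥ t₀, p t = p t₀ :=
  stmt_10_general a ha_cont ha_div t₀ p hp heq
end

section
/- Let $S\subset H$ be a nonempty closed convex subset of a Hilbert space and $G:H\to\mathbb{R}$ a convex $C^1$ function with $S=\operatorname{argmin} G$. Let $\bar{x}\in\partial S$ and suppose $d:=\lim_{x\to\bar{x},\,x\notin S}\nabla G(x)/|\nabla G(x)|$ exists (with $|d|=1$). Then the normal cone of $S$ at $\bar{x}$ satisfies $N_S(\bar{x})=\mathbb{R}_+\,d$. -/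
open Set Filter Topology

open scoped RealInnerProductSpace

/-!
Every minimizer `y` of `G` satisfies `⟪∇G x, y - x⟫ ≤ G y - G x ≤ 0` for all `x`, so the unit
vector `d`, as a limit of normalized gradients, lies in the normal cone of `S` at `x̄`.
Conversely, if `⟪d, w⟫ < 0` then the ray `x̄ + t w` enters `S` for some `t > 0`: otherwise the
points `x̄ + t w` approach `x̄` from outside `S`, and `⟪∇G (x̄ + t w), w⟫ ≥ 0` would force
`⟪d, w⟫ ≥ 0`. Hence every normal vector `ξ` satisfies `⟪ξ, w⟫ ≤ 0` on the open half-space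
`⟪d, w⟫ < 0`, which pins `ξ` to the ray `ℝ₊ d`.
-/

lemma ConvexOn.add_fderiv_sub_le {E : Type*} [NormedAddCommGroup E] [NormedSpace ℝ E]
    {s : Set E} {f : E → ℝ} {f' : E →L[ℝ] ℝ} {x y : E} (hf : ConvexOn ℝ s f)
    (hx : x ∈ s) (hy : y ∈ s) (hf' : HasFDerivAt f f' x) :
    f x + f' (y - x) ≤ f y := by
  let L : ℝ →ᵃ[ℝ] E := AffineMap.lineMap x y
  have hL0 : L 0 = x := AffineMap.lineMap_apply_zero x y
  have hL1 : L 1 = y := AffineMap.lineMap_apply_one x y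
  have hderiv : HasDerivAt (f ∘ L) (f' (y - x)) 0 :=
    (hL0 ▸ hf').comp_hasDerivAt 0 AffineMap.hasDerivAt_lineMap
  have := (hf.comp_affineMap L).le_slope_of_hasDerivAt (hL0 ▸ hx : L 0 ∈ s)
    (hL1 ▸ hy : L 1 ∈ s) one_pos hderiv
  rw [slope_def_field, Function.comp_apply, Function.comp_apply, hL0, hL1] at this
  linarith

section InnerProductSpace

variable {H : Type*} [NormedAddCommGroup H] [InnerProductSpace ℝ H]

lemma inner_sub_nonpos_of_tendsto {u : H → H} {l : Filter H} [l.NeBot] {x₀ y d : H}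
    (hl : l ≤ 𝓝 x₀) (hu : ∀ᶠ x in l, ⟪u x, y - x⟫ ≤ 0) (hlim : Tendsto u l (𝓝 d)) :
    ⟪d, y - x₀⟫ ≤ 0 :=
  le_of_tendsto (hlim.inner (tendsto_const_nhds.sub (tendsto_id.mono_left hl))) hu

lemma exists_pos_add_smul_mem_of_tendsto {u : H → H} {S : Set H} {x₀ d w : H}
    (hu : ∀ x ∉ S, ⟪u x, x₀ - x⟫ ≤ 0) (hlim : Tendsto u (𝓝[Sᶜ] x₀) (𝓝 d))
    (hw : ⟪d, w⟫ < 0) : ∃ ε : ℝ, 0 < ε ∧ x₀ + ε • w ∈ S := by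
  by_contra! hout
  have hray : Tendsto (fun t : ℝ => x₀ + t • w) (𝓝[>] 0) (𝓝[Sᶜ] x₀) := by
    refine tendsto_nhdsWithin_iff.2 ⟨?_, eventually_nhdsWithin_of_forall hout⟩
    have : Tendsto (fun t : ℝ => x₀ + t • w) (𝓝 0) (𝓝 (x₀ + (0 : ℝ) • w)) :=
      tendsto_const_nhds.add (tendsto_id.smul_const w)
    simpa using this.mono_left nhdsWithin_le_nhds
  have hnonneg : ∀ᶠ t in 𝓝[>] (0 : ℝ), 0 ≤ ⟪u (x₀ + t • w), w⟫ := by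
    refine eventually_nhdsWithin_of_forall fun t (ht : 0 < t) => ?_
    have := hu _ (hout t ht)
    rw [sub_add_cancel_left, inner_neg_right, real_inner_smul_right] at this
    exact nonneg_of_mul_nonneg_right (by linarith) ht
  exact hw.not_ge (ge_of_tendsto ((hlim.comp hray).inner tendsto_const_nhds) hnonneg)

lemma exists_nonneg_smul_eq_of_inner_nonpos {d ξ : H} (hd : ‖d‖ = 1)
    (h : ∀ w, ⟪d, w⟫ < 0 → ⟪ξ, w⟫ ≤ 0) : ∃ r : ℝ, 0 ≤ r ∧ ξ = r • d := by
  have hdd : ⟪d, d⟫ = 1 := by rw [real_inner_self_eq_norm_sq, hd, one_pow]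
  set r := ⟪ξ, d⟫
  have hr : 0 ≤ r := by
    have := h (-d) (by rw [inner_neg_right, hdd]; norm_num)
    rw [inner_neg_right] at this
    linarith
  set v := ξ - r • d
  have hdv : ⟪d, v⟫ = 0 := by
    rw [inner_sub_right, real_inner_smul_right, hdd, real_inner_comm]; ring
  have hξv : ⟪ξ, v⟫ = ‖v‖ ^ 2 := by
    rw [← real_inner_self_eq_norm_sq, inner_sub_left, real_inner_smul_left, hdv, mul_zero,
      sub_zero]
  refine ⟨r, hr, sub_eq_zero.1 (?_ : v = 0)⟩
  by_contra hv
  have hv2 : 0 < ‖v‖ ^ 2 := by positivity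
  -- along `t v - d` with `t = (r + 1) / ‖v‖²` the pairing with `ξ` is `t ‖v‖² - r = 1`
  have := h (((r + 1) / ‖v‖ ^ 2) • v - d) (by
    rw [inner_sub_right, real_inner_smul_right, hdv, hdd]; norm_num)
  rw [inner_sub_right, real_inner_smul_right, hξv, div_mul_cancel₀ _ hv2.ne'] at this
  linarith

end InnerProductSpace

theorem stmt_12_general
    {H : Type*} [NormedAddCommGroup H] [InnerProductSpace ℝ H] [CompleteSpace H]
    (G : H → ℝ) (hGconv : ConvexOn ℝ Set.univ G)
    (G' : H → H) (hG : ∀ y, HasGradientAt G (G' y) y)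
    (S : Set H) (hS : S = {y | ∀ z, G y ≤ G z})
    (xbar : H) (hxbar : xbar ∈ frontier S)
    (d : H) (hd : ‖d‖ = 1)
    (hlim : Filter.Tendsto (fun y => ‖G' y‖⁻¹ • G' y) (nhdsWithin xbar Sᶜ) (nhds d)) :
    {ξ : H | ∀ y ∈ S, ⟪ξ, y - xbar⟫ ≤ 0} = {ξ : H | ∃ r : ℝ, 0 ≤ r ∧ ξ = r • d} := by
  have hSclosed : IsClosed S := by
    rw [hS, ofPred_forall]
    exact isClosed_iInter fun z =>
      isClosed_le (continuous_iff_continuousAt.2 fun x => (hG x).continuousAt) continuous_const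
  have hxS : xbar ∈ S := hSclosed.frontier_subset hxbar
  have : (𝓝[Sᶜ] xbar).NeBot :=
    mem_closure_iff_nhdsWithin_neBot.1 (frontier_subset_closure (frontier_compl S ▸ hxbar))
  have hdescent : ∀ x, ∀ y ∈ S, ⟪‖G' x‖⁻¹ • G' x, y - x⟫ ≤ 0 := fun x y hy => by
    have := hGconv.add_fderiv_sub_le (mem_univ x) (mem_univ y) (hG x).hasFDerivAt
    rw [InnerProductSpace.toDual_apply_apply] at this
    rw [hS] at hy
    rw [real_inner_smul_left]
    exact mul_nonpos_of_nonneg_of_nonpos (by positivity) (by linarith [hy x])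
  ext ξ
  refine ⟨fun hξ => exists_nonneg_smul_eq_of_inner_nonpos hd fun w hw => ?_, ?_⟩
  · obtain ⟨ε, hε, hmem⟩ :=
      exists_pos_add_smul_mem_of_tendsto (fun x _ => hdescent x xbar hxS) hlim hw
    have := hξ _ hmem
    rw [add_sub_cancel_left, real_inner_smul_right] at this
    exact nonpos_of_mul_nonpos_right this hε
  · rintro ⟨r, hr, rfl⟩ y hy
    rw [real_inner_smul_left]
    exact mul_nonpos_of_nonneg_of_nonpos hr (inner_sub_nonpos_of_tendsto nhdsWithin_le_nhds
      (Eventually.of_forall fun x => hdescent x y hy) hlim)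

/-- If the normalized gradient of a convex `C¹` function has a limit `d` at a boundary
point `x̄` of `S = argmin G` from outside `S`, then the normal cone of `S` at `x̄` is the
half-line `ℝ₊ d`. -/
theorem stmt_12
    {H : Type*} [NormedAddCommGroup H] [InnerProductSpace ℝ H] [CompleteSpace H]
    (G : H → ℝ) (hGconv : ConvexOn ℝ Set.univ G)
    (G' : H → H) (hG : ∀ y, HasGradientAt G (G' y) y)
    (S : Set H) (hS : S = {y | ∀ z, G y ≤ G z}) (hSne : S.Nonempty)
    (xbar : H) (hxbar : xbar ∈ frontier S)
    (d : H) (hd : ‖d‖ = 1)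
    (hlim : Filter.Tendsto (fun y => ‖G' y‖⁻¹ • G' y) (nhdsWithin xbar Sᶜ) (nhds d)) :
    {ξ : H | ∀ y ∈ S, ⟪ξ, y - xbar⟫ ≤ 0} = {ξ : H | ∃ r : ℝ, 0 ≤ r ∧ ξ = r • d} :=
  stmt_12_general G hGconv G' hG S hS xbar hxbar d hd hlim
end

section
/- Let $a:\mathbb{R}_+\to\mathbb{R}_+$ be non-increasing with $a(t)\ge a_0>0$ for all $t$, and let $x$ be a bounded global solution of $\ddot{x}+a\dot{x}+g(x)=0$ in $\mathbb{R}^n$ with $g=\nabla G$ Lipschitz on bounded sets and $\ddot{x}$ uniformly bounded. If moreover $\int_0^\infty a(t)|\dot{x}(t)|^2\,dt<\infty$, then $\dot{x}(t)\to 0$ as $t\to\infty$. If additionally the zero set of $g$ is finite, then $x(t)$ converges to one of the zeros of $g$ as $t\to\infty$. -/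
/-!
Since `a ≥ a₀ > 0`, the dissipation bound makes `‖ẋ‖²` integrable, and `ẋ` is uniformly
continuous because `ẍ` is bounded, so Barbalat's lemma gives `ẋ → 0`. As `a` is bounded by `a 0`,
`ẍ + g(x) = -a ẋ → 0`; since `g ∘ x` is uniformly continuous (`x` and hence `ẋ` are bounded, and
`g` is Lipschitz on bounded sets), comparing the increments of `ẋ` over intervals of fixed length
with `g(x(t))` forces `g(x(t)) → 0`. By compactness `x(t)` eventually stays close to the zeros of
`g`, and when there are finitely many, connectedness of `x([T, ∞))` pins it near a single one.
-/

open Set Filter MeasureTheory Metric Topology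

section

variable {E : Type*} [NormedAddCommGroup E]

/-- Barbalat's lemma: otherwise `‖f‖ ^ p ≥ (ε / 2) ^ p` on intervals of fixed length arbitrarily
far out, contradicting the integrability of the tail. -/
theorem tendsto_zero_of_uniformContinuousOn_of_integrableOn_norm_pow {f : ℝ → E} {t₀ : ℝ} {p : ℕ}
    (hf : UniformContinuousOn f (Ici t₀)) (hint : IntegrableOn (fun t => ‖f t‖ ^ p) (Ici t₀)) :
    Tendsto f atTop (𝓝 0) := by
  rw [NormedAddGroup.tendsto_nhds_zero]
  intro ε hε
  obtain ⟨δ, hδ, hfδ⟩ := Metric.uniformContinuousOn_iff.mp hf (ε / 2) (half_pos hε)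
  have hII : ∀ a b, t₀ ≤ a → t₀ ≤ b → IntervalIntegrable (fun t => ‖f t‖ ^ p) volume a b :=
    fun a b ha hb => (hint.mono_set fun s hs => (le_min ha hb).trans hs.1).intervalIntegrable
  have htail : Tendsto (fun T => ∫ s in T..T + δ / 2, ‖f s‖ ^ p) atTop (𝓝 0) := by
    have hI := fun {T : ℝ → ℝ} (hT : Tendsto T atTop atTop) =>
      intervalIntegral_tendsto_integral_Ioi t₀ (hint.mono_set Ioi_subset_Ici_self) hT
    have := (hI (tendsto_atTop_add_const_right _ (δ / 2) tendsto_id)).sub (hI tendsto_id)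
    rw [sub_self] at this
    refine this.congr' ?_
    filter_upwards [eventually_ge_atTop t₀] with T hT
    exact intervalIntegral.integral_interval_sub_left (hII _ (T + δ / 2) le_rfl (by linarith))
      (hII _ _ le_rfl hT)
  filter_upwards [htail.eventually (gt_mem_nhds (by positivity : 0 < δ / 2 * (ε / 2) ^ p)),
    eventually_ge_atTop t₀] with t hsmall ht
  by_contra! hft
  have hlow : ∀ s ∈ Icc t (t + δ / 2), (ε / 2) ^ p ≤ ‖f s‖ ^ p := fun s hs => by
    have hdist : dist (f s) (f t) < ε / 2 := hfδ s (ht.trans hs.1) t ht <| by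
      rw [Real.dist_eq, abs_of_nonneg (by linarith [hs.1])]; linarith [hs.2]
    rw [dist_eq_norm] at hdist
    have := norm_sub_norm_le (f t) (f s)
    rw [norm_sub_rev] at this
    gcongr
    linarith
  have := intervalIntegral.integral_mono_on (by linarith) intervalIntegrable_const
    (hII _ _ ht (by linarith)) hlow
  rw [intervalIntegral.integral_const, smul_eq_mul, add_sub_cancel_left] at this
  linarith

variable [NormedSpace ℝ E]

theorem lipschitzOnWith_Ici_of_norm_deriv_le {f f' : ℝ → E} {t₀ M : ℝ}
    (hf : ∀ t ≥ t₀, HasDerivAt f (f' t) t) (hM : ∀ t ≥ t₀, ‖f' t‖ ≤ M) :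
    LipschitzOnWith M.toNNReal f (Ici t₀) :=
  (convex_Ici t₀).lipschitzOnWith_of_nnnorm_hasDerivWithin_le
    (fun t ht => (hf t ht).hasDerivWithinAt) fun t ht => by
      rw [← NNReal.coe_le_coe, coe_nnnorm]
      exact (hM t ht).trans (Real.le_coe_toNNReal M)

/-- Taylor's formula on `[t, t + 1]` gives `‖x (t + 1) - x t - v t‖ ≤ M`. -/
theorem norm_deriv_le_of_norm_le_of_norm_deriv2_le {x v w : ℝ → E} {t₀ C M : ℝ}
    (hx : ∀ t ≥ t₀, HasDerivAt x (v t) t) (hv : ∀ t ≥ t₀, HasDerivAt v (w t) t)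
    (hC : ∀ t ≥ t₀, ‖x t‖ ≤ C) (hM : ∀ t ≥ t₀, ‖w t‖ ≤ M) {t : ℝ} (ht : t₀ ≤ t) :
    ‖v t‖ ≤ 2 * C + M := by
  have hv_lip : ∀ s ∈ Ico t (t + 1), ‖v s - v t‖ ≤ M := fun s hs => by
    have := norm_image_sub_le_of_norm_deriv_le_segment'
      (fun u hu => (hv u (ht.trans hu.1)).hasDerivWithinAt)
      (fun u hu => hM u (ht.trans hu.1)) s (Ico_subset_Icc_self hs)
    have hM0 : 0 ≤ M := (norm_nonneg _).trans (hM t ht)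
    nlinarith [hs.2]
  have htaylor := norm_image_sub_le_of_norm_deriv_le_segment'
    (f := fun s => x s - s • v t) (f' := fun s => v s - v t)
    (fun s hs => (((hx s (ht.trans hs.1)).sub ((hasDerivAt_id s).smul_const (v t))).congr_deriv
      (by rw [one_smul])).hasDerivWithinAt)
    hv_lip (t + 1) (right_mem_Icc.2 (by linarith))
  have hrw : x (t + 1) - (t + 1) • v t - (x t - t • v t) = x (t + 1) - x t - v t := by
    rw [add_smul, one_smul]; abel
  rw [hrw, add_sub_cancel_left, mul_one] at htaylor
  have h1 := hC (t + 1) (by linarith)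
  have h2 := hC t ht
  calc ‖v t‖ = ‖(x (t + 1) - x t) - (x (t + 1) - x t - v t)‖ := by rw [sub_sub_cancel]
    _ ≤ ‖x (t + 1)‖ + ‖x t‖ + M := (norm_sub_le _ _).trans (add_le_add (norm_sub_le _ _) htaylor)
    _ ≤ 2 * C + M := by linarith

/-- Comparing `v (t + h) - v t` with `h • r t` by the mean value inequality. -/
theorem tendsto_zero_of_hasDerivAt_of_tendsto_sub {v w r : ℝ → E} {t₀ : ℝ}
    (hv : Tendsto v atTop (𝓝 0)) (hvw : ∀ t ≥ t₀, HasDerivAt v (w t) t)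
    (hr : UniformContinuousOn r (Ici t₀)) (hwr : Tendsto (fun t => w t - r t) atTop (𝓝 0)) :
    Tendsto r atTop (𝓝 0) := by
  rw [NormedAddGroup.tendsto_nhds_zero] at hv hwr ⊢
  intro ε hε
  obtain ⟨δ, hδ, hrδ⟩ := Metric.uniformContinuousOn_iff.mp hr (ε / 4) (by positivity)
  obtain ⟨h, hh, hhδ⟩ : ∃ h, 0 < h ∧ h < δ := ⟨δ / 2, half_pos hδ, half_lt_self hδ⟩
  obtain ⟨T, hT⟩ := eventually_atTop.mp
    ((hwr (ε / 4) (by positivity)).and (hv (h * ε / 4) (by positivity)) |>.and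
      (eventually_ge_atTop t₀))
  filter_upwards [eventually_ge_atTop T] with t ht
  have ht₀ := (hT t ht).2
  have hbound : ∀ s ∈ Ico t (t + h), ‖w s - r t‖ ≤ ε / 2 := fun s hs => by
    have h1 := (hT s (ht.trans hs.1)).1.1
    have h2 : dist (r s) (r t) < ε / 4 := hrδ s (ht₀.trans hs.1) t ht₀ <| by
      rw [Real.dist_eq, abs_of_nonneg (by linarith [hs.1])]; linarith [hs.2]
    rw [dist_eq_norm] at h2
    linarith [norm_sub_le_norm_sub_add_norm_sub (w s) (r s) (r t)]
  have hmvt := norm_image_sub_le_of_norm_deriv_le_segment'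
    (f := fun s => v s - s • r t) (f' := fun s => w s - r t)
    (fun s hs => (((hvw s (ht₀.trans hs.1)).sub ((hasDerivAt_id s).smul_const (r t))).congr_deriv
      (by rw [one_smul])).hasDerivWithinAt)
    hbound (t + h) (right_mem_Icc.2 (by linarith))
  have hrw : v (t + h) - (t + h) • r t - (v t - t • r t) = v (t + h) - v t - h • r t := by
    rw [add_smul]; abel
  rw [hrw, add_sub_cancel_left] at hmvt
  have h1 := (hT (t + h) (by linarith)).1.2
  have h2 := (hT t ht).1.2
  have key : h * ‖r t‖ < h * ε := by
    calc h * ‖r t‖ = ‖(v (t + h) - v t) - (v (t + h) - v t - h • r t)‖ := by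
          rw [sub_sub_cancel, norm_smul, Real.norm_of_nonneg hh.le]
      _ ≤ ‖v (t + h)‖ + ‖v t‖ + ε / 2 * h :=
          (norm_sub_le _ _).trans (add_le_add (norm_sub_le _ _) hmvt)
      _ < h * ε := by linarith
  exact lt_of_mul_lt_mul_left key hh.le

end

theorem MeasureTheory.IntegrableOn.of_mul_left_of_le {α : Type*} [MeasurableSpace α] {μ : Measure α}
    {s : Set α} {a f : α → ℝ} {a₀ : ℝ} (haf : IntegrableOn (fun t => a t * f t) s μ)
    (hs : MeasurableSet s) (ha₀ : 0 < a₀) (ha : ∀ t ∈ s, a₀ ≤ a t)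
    (hf : AEStronglyMeasurable f (μ.restrict s)) (hf₀ : ∀ t ∈ s, 0 ≤ f t) :
    IntegrableOn f s μ := by
  refine (haf.const_mul a₀⁻¹).mono' hf
    ((ae_restrict_iff' hs).2 (Eventually.of_forall fun t ht => ?_))
  rw [Real.norm_of_nonneg (hf₀ t ht), le_inv_mul_iff₀ ha₀]
  exact mul_le_mul_of_nonneg_right (ha t ht) (hf₀ t ht)

theorem continuous_of_forall_isBounded_lipschitzOnWith {X Y : Type*} [PseudoMetricSpace X]
    [PseudoMetricSpace Y] {g : X → Y}
    (hg : ∀ s : Set X, Bornology.IsBounded s → ∃ K, LipschitzOnWith K g s) : Continuous g :=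
  continuous_iff_continuousAt.2 fun p =>
    let ⟨_, hK⟩ := hg (ball p 1) isBounded_ball
    hK.continuousOn.continuousAt (ball_mem_nhds p one_pos)

theorem eventually_mem_thickening_zeros {α X F : Type*} [MetricSpace X] [NormedAddCommGroup F]
    {l : Filter α} {g : X → F} {x : α → X} {K : Set X} (hK : IsCompact K) (hg : ContinuousOn g K)
    (hxK : ∀ᶠ t in l, x t ∈ K) (hgx : Tendsto (fun t => g (x t)) l (𝓝 0)) {ε : ℝ} (hε : 0 < ε) :
    ∀ᶠ t in l, x t ∈ thickening ε (g ⁻¹' {0}) := by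
  obtain ⟨c, hc, hcS⟩ := (hK.diff isOpen_thickening).exists_forall_le' (hg.mono sdiff_subset).norm
    (a := 0) fun p hp => norm_pos_iff.2 fun h0 => hp.2 (self_subset_thickening hε _ h0)
  filter_upwards [hxK, NormedAddGroup.tendsto_nhds_zero.mp hgx c hc] with t htK htc
  by_contra hnot
  exact (hcS (x t) ⟨htK, hnot⟩).not_gt htc

theorem Set.Finite.exists_pos_forall_two_mul_le_dist {X : Type*} [MetricSpace X] {Z : Set X}
    (hZ : Z.Finite) : ∃ ε > 0, ∀ z ∈ Z, ∀ z' ∈ Z, z ≠ z' → 2 * ε ≤ dist z z' := by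
  have : ∀ᶠ ε in 𝓝[>] (0 : ℝ), ∀ z ∈ Z, ∀ z' ∈ Z, z ≠ z' → 2 * ε ≤ dist z z' :=
    hZ.eventually_all.2 fun z _ => hZ.eventually_all.2 fun z' _ =>
      eventually_imp_distrib_left.2 fun hne => nhdsWithin_le_nhds <|
        (eventually_le_nhds (half_pos (dist_pos.2 hne))).mono fun ε hε => by linarith
  obtain ⟨ε, hsep, hε⟩ := (this.and self_mem_nhdsWithin).exists
  exact ⟨ε, hε, hsep⟩

/-- Once `x` stays in the union of the disjoint balls of radius `ε₀` around the points of `Z`,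
connectedness of `x '' Ici T` traps it in a single ball. -/
theorem Set.Finite.exists_tendsto_of_eventually_mem_thickening {X : Type*} [MetricSpace X]
    {Z : Set X} (hZ : Z.Finite) {x : ℝ → X} (hx : Continuous x)
    (hxZ : ∀ ε > 0, ∀ᶠ t in atTop, x t ∈ thickening ε Z) : ∃ z ∈ Z, Tendsto x atTop (𝓝 z) := by
  obtain ⟨ε₀, hε₀, hsep⟩ := hZ.exists_pos_forall_two_mul_le_dist
  have huniq : ∀ z ∈ Z, ∀ z' ∈ Z, ∀ p, dist p z < ε₀ → dist p z' < ε₀ → z = z' :=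
    fun z hz z' hz' p hpz hpz' => by
      by_contra hne
      linarith [hsep z hz z' hz' hne, dist_triangle_left z z' p]
  obtain ⟨T, hT⟩ := eventually_atTop.mp (hxZ ε₀ hε₀)
  obtain ⟨z₀, hz₀, hxT⟩ := mem_thickening_iff.mp (hT T le_rfl)
  have hstay : x '' Ici T ⊆ ball z₀ ε₀ := by
    refine (isPreconnected_Ici.image x hx.continuousOn).subset_left_of_subset_union isOpen_ball
      (isOpen_biUnion (s := Z \ {z₀}) fun z _ => isOpen_ball (x := z) (ε := ε₀)) ?_ ?_
      ⟨x T, mem_image_of_mem x self_mem_Ici, hxT⟩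
    · refine Set.disjoint_left.2 fun p hp hp' => ?_
      obtain ⟨z, ⟨hz, hne⟩, hpz⟩ := mem_iUnion₂.mp hp'
      exact hne (huniq z hz z₀ hz₀ p hpz hp)
    · rintro _ ⟨t, ht, rfl⟩
      obtain ⟨z, hz, hxz⟩ := mem_thickening_iff.mp (hT t ht)
      by_cases hzz₀ : z = z₀
      · exact Or.inl (hzz₀ ▸ hxz)
      · exact Or.inr (mem_iUnion₂.mpr ⟨z, ⟨hz, hzz₀⟩, hxz⟩)
  refine ⟨z₀, hz₀, Metric.tendsto_nhds.2 fun ε hε => ?_⟩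
  filter_upwards [hxZ (min ε ε₀) (lt_min hε hε₀), eventually_ge_atTop T] with t hxt ht
  obtain ⟨z, hz, hxz⟩ := mem_thickening_iff.mp hxt
  obtain rfl := huniq z hz z₀ hz₀ (x t) (hxz.trans_le (min_le_right _ _))
    (hstay (mem_image_of_mem x ht))
  exact hxz.trans_le (min_le_left _ _)

theorem stmt_15_general
    (n : ℕ) (a : ℝ → ℝ) (ha_mono : AntitoneOn a (Set.Ici 0))
    (a₀ : ℝ) (ha₀ : 0 < a₀) (ha_low : ∀ t ≥ (0:ℝ), a₀ ≤ a t)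
    (g : EuclideanSpace ℝ (Fin n) → EuclideanSpace ℝ (Fin n))
    (hg_lip : ∀ s : Set (EuclideanSpace ℝ (Fin n)),
      Bornology.IsBounded s → ∃ K : NNReal, LipschitzOnWith K g s)
    (x : ℝ → EuclideanSpace ℝ (Fin n)) (hx : ContDiff ℝ 2 x)
    (hode : ∀ t ≥ (0:ℝ), deriv (deriv x) t + a t • deriv x t + g (x t) = 0)
    (hx_bdd : ∃ C, ∀ t ≥ (0:ℝ), ‖x t‖ ≤ C)
    (hacc_bdd : ∃ M, ∀ t ≥ (0:ℝ), ‖deriv (deriv x) t‖ ≤ M)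
    (hdiss : MeasureTheory.IntegrableOn (fun t => a t * ‖deriv x t‖^2) (Set.Ici 0)) :
    Filter.Tendsto (deriv x) Filter.atTop (nhds 0) ∧
    ((g ⁻¹' {0}).Finite →
      ∃ xstar, g xstar = 0 ∧ Filter.Tendsto x Filter.atTop (nhds xstar)) := by
  obtain ⟨C, hC⟩ := hx_bdd
  obtain ⟨M, hM⟩ := hacc_bdd
  obtain ⟨hx_diff, -, hv_smooth⟩ := contDiff_succ_iff_deriv.mp (show ContDiff ℝ (1 + 1) x from hx)
  have hx_deriv : ∀ t, HasDerivAt x (deriv x t) t := fun t => (hx_diff t).hasDerivAt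
  have hv_deriv : ∀ t, HasDerivAt (deriv x) (deriv (deriv x) t) t :=
    fun t => ((hv_smooth.differentiable one_ne_zero) t).hasDerivAt
  have hv : Tendsto (deriv x) atTop (𝓝 0) :=
    tendsto_zero_of_uniformContinuousOn_of_integrableOn_norm_pow
      (lipschitzOnWith_Ici_of_norm_deriv_le (fun t _ => hv_deriv t) hM).uniformContinuousOn
      (hdiss.of_mul_left_of_le measurableSet_Ici ha₀ ha_low
        (hv_smooth.continuous.norm.pow 2).aestronglyMeasurable fun t _ => by positivity)
  refine ⟨hv, fun hfin => ?_⟩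
  have hxK : MapsTo x (Ici 0) (closedBall 0 C) := fun t ht => mem_closedBall_zero_iff.2 (hC t ht)
  obtain ⟨K, hK⟩ := hg_lip _ isBounded_closedBall
  have hdamp : Tendsto (fun t => -deriv (deriv x) t - g (x t)) atTop (𝓝 0) := by
    refine squeeze_zero_norm' ?_ (by simpa using hv.norm.const_mul (a 0))
    filter_upwards [eventually_ge_atTop 0] with t ht
    have ha_t : 0 ≤ a t := ha₀.le.trans (ha_low t ht)
    rw [show -deriv (deriv x) t - g (x t) = a t • deriv x t by
      rw [← sub_eq_zero, ← neg_eq_zero, ← hode t ht]; abel, norm_smul, Real.norm_of_nonneg ha_t]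
    exact mul_le_mul_of_nonneg_right (ha_mono self_mem_Ici ht ht) (norm_nonneg _)
  have hx_lip : LipschitzOnWith (2 * C + M).toNNReal x (Ici 0) :=
    lipschitzOnWith_Ici_of_norm_deriv_le (fun t _ => hx_deriv t) fun t ht =>
      norm_deriv_le_of_norm_le_of_norm_deriv2_le (fun t _ => hx_deriv t) (fun t _ => hv_deriv t)
        hC hM ht
  have hgx : Tendsto (fun t => g (x t)) atTop (𝓝 0) :=
    tendsto_zero_of_hasDerivAt_of_tendsto_sub (v := fun t => -deriv x t) (by simpa using hv.neg)
      (fun t _ => (hv_deriv t).neg) (hK.comp hx_lip hxK).uniformContinuousOn hdamp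
  exact hfin.exists_tendsto_of_eventually_mem_thickening hx.continuous fun ε hε =>
    eventually_mem_thickening_zeros (isCompact_closedBall 0 C)
      (continuous_of_forall_isBounded_lipschitzOnWith hg_lip).continuousOn
      (eventually_ge_atTop 0 |>.mono fun t ht => hxK ht) hgx hε

/-- If the damping is bounded below by `a₀ > 0`, then `ẋ(t) → 0`, and if `g` has finitely
many zeros, `x(t)` converges to one of them. -/
theorem stmt_15
    (n : ℕ) (a : ℝ → ℝ) (ha_mono : AntitoneOn a (Set.Ici 0))
    (a₀ : ℝ) (ha₀ : 0 < a₀) (ha_low : ∀ t ≥ (0:ℝ), a₀ ≤ a t)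
    (G : EuclideanSpace ℝ (Fin n) → ℝ)
    (g : EuclideanSpace ℝ (Fin n) → EuclideanSpace ℝ (Fin n))
    (hG : ∀ y, HasGradientAt G (g y) y)
    (hg_lip : ∀ s : Set (EuclideanSpace ℝ (Fin n)),
      Bornology.IsBounded s → ∃ K : NNReal, LipschitzOnWith K g s)
    (x : ℝ → EuclideanSpace ℝ (Fin n)) (hx : ContDiff ℝ 2 x)
    (hode : ∀ t ≥ (0:ℝ), deriv (deriv x) t + a t • deriv x t + g (x t) = 0)
    (hx_bdd : ∃ C, ∀ t ≥ (0:ℝ), ‖x t‖ ≤ C)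
    (hacc_bdd : ∃ M, ∀ t ≥ (0:ℝ), ‖deriv (deriv x) t‖ ≤ M)
    (hdiss : MeasureTheory.IntegrableOn (fun t => a t * ‖deriv x t‖^2) (Set.Ici 0)) :
    Filter.Tendsto (deriv x) Filter.atTop (nhds 0) ∧
    ((g ⁻¹' {0}).Finite →
      ∃ xstar, g xstar = 0 ∧ Filter.Tendsto x Filter.atTop (nhds xstar)) :=
  stmt_15_general n a ha_mono a₀ ha₀ ha_low g hg_lip x hx hode hx_bdd hacc_bdd hdiss
end

section
/- Let $a:\mathbb{R}_+\to\mathbb{R}_+$ be a non-increasing $C^2$ map with $a(t)\to 0$ and $\dot{a}(t)\to 0$ as $t\to\infty$, and suppose $\ddot{a}(t)+a(t)\dot{a}(t)$ has constant sign for large $t$. Then any solution $x$ of $\ddot{x}(t)+a(t)\dot{x}(t)+x(t)=0$ in a Hilbert space satisfies: there exist constants $0<k<K<\infty$ such that for all sufficiently large $t$, $k\,e^{-\int_0^t a(s)ds}\le |x(t)|^2+|\dot{x}(t)|^2\le K\,e^{-\int_0^t a(s)ds}$, provided $x$ is not identically zero. -/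
/-!
Write `E = ‖x‖² + ‖ẋ‖²`, `p = ⟪x, ẋ⟫` and `G = E + a p`; then `G' = -a G + a' p`.
Once `a ≤ 1/2`, `G` is comparable to `E` and `|p| ≤ G`, so `F = G e^{∫₀ᵗ a}` satisfies
`|F'| = |a' p| e^{∫₀ᵗ a} ≤ -a' F` because `a' ≤ 0`. Thus `log F` moves by at most the
variation of `a`, which is at most `1/2` after the time `T` where `a ≤ 1/2` starts, and `F`
stays within the factors `e^{∓1/2}` of `F(T)`. Finally `F(T) > 0`, since `E e^{2∫a}` is
nondecreasing and `x(t₀) ≠ 0`.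
-/

open Set Filter Real
open scoped RealInnerProductSpace

section ExponentialComparison

variable {F F' g g' : ℝ → ℝ} {T : ℝ}

theorem antitoneOn_mul_exp_neg_of_deriv_le (hF : ∀ t, HasDerivAt F (F' t) t)
    (hg : ∀ t, HasDerivAt g (g' t) t) (hle : ∀ t > T, F' t ≤ g' t * F t) :
    AntitoneOn (fun t => F t * exp (-g t)) (Ici T) := by
  have hd : ∀ t, HasDerivAt (fun t => F t * exp (-g t)) ((F' t - g' t * F t) * exp (-g t)) t :=
    fun t => ((hF t).mul (hg t).fun_neg.exp).congr_deriv (by ring)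
  refine antitoneOn_of_hasDerivWithinAt_nonpos (convex_Ici T)
    (fun t _ => (hd t).continuousAt.continuousWithinAt) (fun t _ => (hd t).hasDerivWithinAt)
    fun t ht => ?_
  rw [interior_Ici] at ht
  exact mul_nonpos_of_nonpos_of_nonneg (sub_nonpos.2 (hle t ht)) (exp_pos _).le

theorem monotoneOn_mul_exp_neg_of_le_deriv (hF : ∀ t, HasDerivAt F (F' t) t)
    (hg : ∀ t, HasDerivAt g (g' t) t) (hle : ∀ t > T, g' t * F t ≤ F' t) :
    MonotoneOn (fun t => F t * exp (-g t)) (Ici T) := by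
  have h := antitoneOn_mul_exp_neg_of_deriv_le (F := fun t => -F t) (fun t => (hF t).neg) hg
    fun t ht => by simpa only [mul_neg, neg_le_neg_iff] using hle t ht
  intro s hs t ht hst
  simpa only [neg_mul, neg_le_neg_iff] using h hs ht hst

theorem mul_exp_sub_le_and_le_mul_exp_sub {b b' : ℝ → ℝ} (hF : ∀ t, HasDerivAt F (F' t) t)
    (hb : ∀ t, HasDerivAt b (b' t) t) (hle : ∀ t > T, |F' t| ≤ -b' t * F t) {t : ℝ}
    (ht : T ≤ t) : F T * exp (b t - b T) ≤ F t ∧ F t ≤ F T * exp (b T - b t) := by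
  have h₁ := monotoneOn_mul_exp_neg_of_le_deriv hF hb
    (fun s hs => by linarith [neg_abs_le (F' s), hle s hs]) self_mem_Ici ht ht
  have h₂ := antitoneOn_mul_exp_neg_of_deriv_le (g := fun s => -b s) hF (fun s => (hb s).fun_neg)
    (fun s hs => by linarith [le_abs_self (F' s), hle s hs]) self_mem_Ici ht ht
  simp only [neg_neg] at h₁ h₂
  constructor
  · calc F T * exp (b t - b T) = F T * exp (-b T) * exp (b t) := by
          rw [sub_eq_add_neg, exp_add]; ring
      _ ≤ F t * exp (-b t) * exp (b t) := mul_le_mul_of_nonneg_right h₁ (exp_pos _).le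
      _ = F t := by rw [mul_assoc, ← exp_add, neg_add_cancel, exp_zero, mul_one]
  · calc F t = F t * exp (b t) * exp (-b t) := by
          rw [mul_assoc, ← exp_add, add_neg_cancel, exp_zero, mul_one]
      _ ≤ F T * exp (b T) * exp (-b t) := mul_le_mul_of_nonneg_right h₂ (exp_pos _).le
      _ = F T * exp (b T - b t) := by rw [sub_eq_add_neg, exp_add]; ring

end ExponentialComparison

theorem abs_real_inner_le_add_sq_div_two {H : Type*} [NormedAddCommGroup H] [InnerProductSpace ℝ H]
    (u w : H) : |⟪u, w⟫| ≤ (‖u‖ ^ 2 + ‖w‖ ^ 2) / 2 :=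
  (abs_real_inner_le_norm u w).trans (by nlinarith [sq_nonneg (‖u‖ - ‖w‖)])

namespace DampedOscillator

variable {H : Type*} [NormedAddCommGroup H] [InnerProductSpace ℝ H]

def energy (x v : ℝ → H) (t : ℝ) : ℝ := ‖x t‖ ^ 2 + ‖v t‖ ^ 2

def modifiedEnergy (a : ℝ → ℝ) (x v : ℝ → H) (t : ℝ) : ℝ := energy x v t + a t * ⟪x t, v t⟫

variable {a a' : ℝ → ℝ} {x v : ℝ → H}

theorem abs_inner_le_energy_div_two (t : ℝ) : |⟪x t, v t⟫| ≤ energy x v t / 2 :=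
  abs_real_inner_le_add_sq_div_two (x t) (v t)

theorem modifiedEnergy_mem_Icc {t : ℝ} (h₀ : 0 ≤ a t) (h₁ : a t ≤ 1 / 2) :
    modifiedEnergy a x v t ∈ Icc (3 / 4 * energy x v t) (5 / 4 * energy x v t) := by
  have hp := abs_le.1 (abs_inner_le_energy_div_two (x := x) (v := v) t)
  have hE : 0 ≤ energy x v t := by unfold energy; positivity
  unfold modifiedEnergy
  constructor <;> nlinarith [mul_le_mul_of_nonneg_left hp.1 h₀, mul_le_mul_of_nonneg_left hp.2 h₀]

theorem abs_inner_le_modifiedEnergy {t : ℝ} (h₀ : 0 ≤ a t) (h₁ : a t ≤ 1 / 2) :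
    |⟪x t, v t⟫| ≤ modifiedEnergy a x v t := by
  have hE : 0 ≤ energy x v t := by unfold energy; positivity
  linarith [abs_inner_le_energy_div_two (x := x) (v := v) t,
    (modifiedEnergy_mem_Icc (x := x) (v := v) h₀ h₁).1]

theorem hasDerivAt_energy (hx : ∀ t, HasDerivAt x (v t) t)
    (hv : ∀ t, HasDerivAt v (-x t - a t • v t) t) (t : ℝ) :
    HasDerivAt (energy x v) (-2 * a t * ‖v t‖ ^ 2) t := by
  have h := ((hx t).inner ℝ (hx t)).add ((hv t).inner ℝ (hv t))
  simp only [real_inner_self_eq_norm_sq] at h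
  refine h.congr_deriv ?_
  simp only [inner_sub_left, inner_sub_right, inner_neg_left, inner_neg_right,
    real_inner_smul_left, real_inner_smul_right, real_inner_self_eq_norm_sq,
    real_inner_comm (x t) (v t)]
  ring

theorem hasDerivAt_inner (hx : ∀ t, HasDerivAt x (v t) t)
    (hv : ∀ t, HasDerivAt v (-x t - a t • v t) t) (t : ℝ) :
    HasDerivAt (fun s => ⟪x s, v s⟫) (‖v t‖ ^ 2 - ‖x t‖ ^ 2 - a t * ⟪x t, v t⟫) t := by
  refine ((hx t).inner ℝ (hv t)).congr_deriv ?_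
  simp only [inner_sub_right, inner_neg_right, real_inner_smul_right, real_inner_self_eq_norm_sq]
  ring

theorem hasDerivAt_modifiedEnergy (hx : ∀ t, HasDerivAt x (v t) t)
    (hv : ∀ t, HasDerivAt v (-x t - a t • v t) t) (ha : ∀ t, HasDerivAt a (a' t) t) (t : ℝ) :
    HasDerivAt (modifiedEnergy a x v)
      (-a t * modifiedEnergy a x v t + a' t * ⟪x t, v t⟫) t := by
  refine ((hasDerivAt_energy hx hv t).add ((ha t).mul (hasDerivAt_inner hx hv t))).congr_deriv ?_
  unfold modifiedEnergy energy
  ring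

theorem energy_pos_of_ne_zero (hx : ∀ t, HasDerivAt x (v t) t)
    (hv : ∀ t, HasDerivAt v (-x t - a t • v t) t) (ha : Continuous a) {t₀ t : ℝ}
    (ha₀ : ∀ s > t₀, 0 ≤ a s) (hx₀ : x t₀ ≠ 0) (ht : t₀ ≤ t) : 0 < energy x v t := by
  have hA : ∀ s, HasDerivAt (fun s => -2 * ∫ r in (0:ℝ)..s, a r) (-2 * a s) s :=
    fun s => (ha.integral_hasStrictDerivAt 0 s).hasDerivAt.const_mul (-2)
  have hmono := monotoneOn_mul_exp_neg_of_le_deriv (hasDerivAt_energy hx hv) hA (fun s hs => by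
    have hv_le : ‖v s‖ ^ 2 ≤ energy x v s := by unfold energy; nlinarith [sq_nonneg ‖x s‖]
    nlinarith [mul_le_mul_of_nonneg_left hv_le (ha₀ s hs)]) self_mem_Ici ht ht
  have hE₀ : 0 < energy x v t₀ := by
    have := norm_pos_iff.2 hx₀
    unfold energy; positivity
  exact (mul_pos_iff_of_pos_right (exp_pos _)).1 ((mul_pos hE₀ (exp_pos _)).trans_le hmono)

theorem modifiedEnergy_mul_exp_integral_mem_Icc (hx : ∀ t, HasDerivAt x (v t) t)
    (hv : ∀ t, HasDerivAt v (-x t - a t • v t) t) (ha : ∀ t, HasDerivAt a (a' t) t) {T t : ℝ}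
    (ha' : ∀ s > T, a' s ≤ 0) (ha₀ : ∀ s ≥ T, 0 ≤ a s) (ha₁ : ∀ s ≥ T, a s ≤ 1 / 2)
    (ht : T ≤ t) :
    modifiedEnergy a x v t * exp (∫ s in (0:ℝ)..t, a s) ∈
      Icc (modifiedEnergy a x v T * exp (∫ s in (0:ℝ)..T, a s) * exp (-(1 / 2)))
        (modifiedEnergy a x v T * exp (∫ s in (0:ℝ)..T, a s) * exp (1 / 2)) := by
  have hac : Continuous a := continuous_iff_continuousAt.2 fun t => (ha t).continuousAt
  have hF : ∀ s, HasDerivAt (fun s => modifiedEnergy a x v s * exp (∫ r in (0:ℝ)..s, a r))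
      (a' s * ⟪x s, v s⟫ * exp (∫ r in (0:ℝ)..s, a r)) s := fun s =>
    ((hasDerivAt_modifiedEnergy hx hv ha s).mul
      (hac.integral_hasStrictDerivAt 0 s).hasDerivAt.exp).congr_deriv (by ring)
  have hle : ∀ s > T, |a' s * ⟪x s, v s⟫ * exp (∫ r in (0:ℝ)..s, a r)|
      ≤ -a' s * (modifiedEnergy a x v s * exp (∫ r in (0:ℝ)..s, a r)) := fun s hs => by
    rw [abs_mul, abs_mul, abs_of_nonpos (ha' s hs), abs_of_pos (exp_pos _), ← mul_assoc]
    exact mul_le_mul_of_nonneg_right (mul_le_mul_of_nonneg_left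
      (abs_inner_le_modifiedEnergy (ha₀ s hs.le) (ha₁ s hs.le)) (neg_nonneg.2 (ha' s hs)))
      (exp_pos _).le
  obtain ⟨hlo, hhi⟩ := mul_exp_sub_le_and_le_mul_exp_sub hF ha hle ht
  have hGT : 0 ≤ modifiedEnergy a x v T * exp (∫ s in (0:ℝ)..T, a s) := by
    have hG := (modifiedEnergy_mem_Icc (x := x) (v := v) (ha₀ T le_rfl) (ha₁ T le_rfl)).1
    have hE : 0 ≤ energy x v T := by unfold energy; positivity
    exact mul_nonneg (by linarith) (exp_pos _).le
  have haT := ha₁ T le_rfl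
  have hat := ha₀ t ht
  refine ⟨le_trans ?_ hlo, hhi.trans ?_⟩ <;> gcongr <;> linarith

theorem exists_energy_bounds (hx : ∀ t, HasDerivAt x (v t) t)
    (hv : ∀ t, HasDerivAt v (-x t - a t • v t) t) (ha : ∀ t, HasDerivAt a (a' t) t) {T : ℝ}
    (ha' : ∀ s > T, a' s ≤ 0) (ha₀ : ∀ s ≥ T, 0 ≤ a s) (ha₁ : ∀ s ≥ T, a s ≤ 1 / 2)
    (hE : 0 < energy x v T) :
    ∃ k K : ℝ, 0 < k ∧ k < K ∧ ∀ t ≥ T,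
      k * exp (-∫ s in (0:ℝ)..t, a s) ≤ energy x v t ∧
        energy x v t ≤ K * exp (-∫ s in (0:ℝ)..t, a s) := by
  set c := modifiedEnergy a x v T * exp (∫ s in (0:ℝ)..T, a s)
  have hc : 0 < c := mul_pos (by linarith [(modifiedEnergy_mem_Icc (x := x) (v := v)
    (ha₀ T le_rfl) (ha₁ T le_rfl)).1]) (exp_pos _)
  refine ⟨4 / 5 * (c * exp (-(1 / 2))), 4 / 3 * (c * exp (1 / 2)), by positivity, ?_,
    fun t ht => ?_⟩
  · calc 4 / 5 * (c * exp (-(1 / 2))) < 4 / 3 * (c * exp (-(1 / 2))) := by gcongr; norm_num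
      _ < 4 / 3 * (c * exp (1 / 2)) := by gcongr; norm_num
  obtain ⟨hlo, hhi⟩ := modifiedEnergy_mul_exp_integral_mem_Icc hx hv ha ha' ha₀ ha₁ ht
  obtain ⟨hGlo, hGhi⟩ := modifiedEnergy_mem_Icc (x := x) (v := v) (ha₀ t ht) (ha₁ t ht)
  set A := ∫ s in (0:ℝ)..t, a s
  have hG : modifiedEnergy a x v t * exp A * exp (-A) = modifiedEnergy a x v t := by
    rw [mul_assoc, ← exp_add, add_neg_cancel, exp_zero, mul_one]
  constructor
  · calc 4 / 5 * (c * exp (-(1 / 2))) * exp (-A)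
        ≤ 4 / 5 * (modifiedEnergy a x v t * exp A) * exp (-A) := by gcongr
      _ = 4 / 5 * modifiedEnergy a x v t := by rw [mul_assoc, hG]
      _ ≤ energy x v t := by linarith
  · calc energy x v t ≤ 4 / 3 * modifiedEnergy a x v t := by linarith
      _ = 4 / 3 * (modifiedEnergy a x v t * exp A) * exp (-A) := by rw [mul_assoc, hG]
      _ ≤ 4 / 3 * (c * exp (1 / 2)) * exp (-A) := by gcongr

end DampedOscillator

theorem stmt_17_general
    {H : Type*} [NormedAddCommGroup H] [InnerProductSpace ℝ H]
    (a : ℝ → ℝ) (ha : ContDiff ℝ 2 a) (ha_nonneg : ∀ t ≥ (0:ℝ), 0 ≤ a t)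
    (ha_mono : AntitoneOn a (Set.Ici 0))
    (ha_lim : Filter.Tendsto a Filter.atTop (nhds 0))
    (x : ℝ → H) (hx : ContDiff ℝ 2 x)
    (hode : ∀ t : ℝ, deriv (deriv x) t + a t • deriv x t + x t = 0)
    (hnontriv : ∃ t ≥ (0:ℝ), x t ≠ 0) :
    ∃ k K : ℝ, 0 < k ∧ k < K ∧ ∃ T : ℝ, ∀ t ≥ T,
      k * Real.exp (-∫ s in (0:ℝ)..t, a s) ≤ ‖x t‖^2 + ‖deriv x t‖^2 ∧
      ‖x t‖^2 + ‖deriv x t‖^2 ≤ K * Real.exp (-∫ s in (0:ℝ)..t, a s) := by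
  obtain ⟨t₀, ht₀, hx₀⟩ := hnontriv
  have had : ∀ t, HasDerivAt a (deriv a t) t :=
    fun t => (ha.differentiable (by norm_num) t).hasDerivAt
  have hxd : ∀ t, HasDerivAt x (deriv x t) t :=
    fun t => (hx.differentiable (by norm_num) t).hasDerivAt
  have hvd : ∀ t, HasDerivAt (deriv x) (-x t - a t • deriv x t) t := fun t => by
    rw [← eq_sub_of_add_eq (eq_neg_of_add_eq_zero_left (hode t))]
    exact (hx.differentiable_deriv_two t).hasDerivAt
  obtain ⟨T₁, hT₁⟩ := eventually_atTop.1 (ha_lim.eventually (eventually_le_nhds one_half_pos))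
  set T := max T₁ t₀
  have hT₀ : 0 ≤ T := ht₀.trans (le_max_right _ _)
  have ha' : ∀ s > T, deriv a s ≤ 0 := fun s hs => by
    rw [← derivWithin_of_mem_nhds (Ici_mem_nhds (hT₀.trans_lt hs))]
    exact ha_mono.derivWithin_nonpos
  have hE := DampedOscillator.energy_pos_of_ne_zero hxd hvd ha.continuous
    (fun s hs => ha_nonneg s (ht₀.trans hs.le)) hx₀ (le_max_right T₁ t₀)
  obtain ⟨k, K, hk, hkK, hbounds⟩ := DampedOscillator.exists_energy_bounds hxd hvd had ha'
    (fun s hs => ha_nonneg s (hT₀.trans hs)) (fun s hs => hT₁ s ((le_max_left _ _).trans hs)) hE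
  exact ⟨k, K, hk, hkK, T, hbounds⟩

/-- Sharp two-sided decay estimate for solutions of `ẍ + a(t) ẋ + x = 0` with vanishing
non-increasing damping: `‖x‖² + ‖ẋ‖² ≍ e^{-∫₀ᵗ a}`. -/
theorem stmt_17
    {H : Type*} [NormedAddCommGroup H] [InnerProductSpace ℝ H] [CompleteSpace H]
    (a : ℝ → ℝ) (ha : ContDiff ℝ 2 a) (ha_nonneg : ∀ t ≥ (0:ℝ), 0 ≤ a t)
    (ha_mono : AntitoneOn a (Set.Ici 0))
    (ha_lim : Filter.Tendsto a Filter.atTop (nhds 0))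
    (ha'_lim : Filter.Tendsto (deriv a) Filter.atTop (nhds 0))
    (ha_sign : (∀ᶠ t in Filter.atTop, deriv (deriv a) t + a t * deriv a t ≤ 0) ∨
               (∀ᶠ t in Filter.atTop, 0 ≤ deriv (deriv a) t + a t * deriv a t))
    (x : ℝ → H) (hx : ContDiff ℝ 2 x)
    (hode : ∀ t : ℝ, deriv (deriv x) t + a t • deriv x t + x t = 0)
    (hnontriv : ∃ t ≥ (0:ℝ), x t ≠ 0) :
    ∃ k K : ℝ, 0 < k ∧ k < K ∧ ∃ T : ℝ, ∀ t ≥ T,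
      k * Real.exp (-∫ s in (0:ℝ)..t, a s) ≤ ‖x t‖^2 + ‖deriv x t‖^2 ∧
      ‖x t‖^2 + ‖deriv x t‖^2 ≤ K * Real.exp (-∫ s in (0:ℝ)..t, a s) :=
  stmt_17_general a ha ha_nonneg ha_mono ha_lim x hx hode hnontriv
end

section
/- Let $a:\mathbb{R}_+\to\mathbb{R}_+$ be continuous with $\int_0^\infty e^{-\int_0^t a(s)ds}\,dt=\infty$, let $G:\mathbb{R}\to\mathbb{R}$ be a convex $C^1$ function with $\operatorname{argmin}G=[\alpha,\beta]$ where $\alpha<\beta$, and let $x$ be a bounded global solution of $\ddot{x}+a\dot{x}+G'(x)=0$ with $(x(0),\dot{x}(0))\notin[\alpha,\beta]\times\{0\}$. Then the trajectory $x(t)$ does not converge as $t\to\infty$; more precisely, there exist sequences $t_n\to\infty$ and $u_n\to\infty$ with $x(t_n)<\alpha$ and $x(u_n)>\beta$. -/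
/-!
With `A t = ∫₀ᵗ a`, the momentum `h = x' e^A` satisfies `h' = -G'(x) e^A`. Suppose `x ≥ α`
from some time `T ≥ 0` on. Then `G'(x) ≥ 0`, so `h` is nonincreasing; a negative value of `h`
would force `x' ≤ h(t₁) e^{-A}` and, since `∫ e^{-A} = ∞`, send `x` to `-∞`. Hence `h ≥ 0` and `x`
is nondecreasing. If `x` ever exceeded `β`, then `G'(x)` would stay above a positive constant
and `h` would decrease at least linearly, so `x` stays in `[α, β]`, where `G' = 0` and `h` is
constant. A positive constant sends `x` to `+∞` again; the zero constant means the solution is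
at rest at time `T`, hence also at time `0` by backward uniqueness for the Lipschitz first-order
system, contradicting the initial data. Excursions above `β` follow by the reflection
`x ↦ -x`, `G ↦ G ∘ (-·)`.
-/

open Set Filter MeasureTheory

theorem tendsto_integral_atTop_of_not_integrableOn_Ici {f : ℝ → ℝ} (hf : Continuous f)
    (hf0 : ∀ t, 0 ≤ f t) (hni : ¬ IntegrableOn f (Ici 0)) :
    Tendsto (fun t => ∫ s in (0:ℝ)..t, f s) atTop atTop := by
  have hmono : Monotone fun t => ∫ s in (0:ℝ)..t, f s := fun u v huv => by
    dsimp only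
    rw [← intervalIntegral.integral_add_adjacent_intervals (hf.intervalIntegrable 0 u)
      (hf.intervalIntegrable u v)]
    simpa using intervalIntegral.integral_nonneg huv fun s _ => hf0 s
  refine tendsto_atTop_atTop_of_monotone' hmono fun ⟨I, hI⟩ => hni ?_
  rw [integrableOn_Ici_iff_integrableOn_Ioi]
  refine integrableOn_Ioi_of_intervalIntegral_norm_bounded I 0 (fun _ => hf.integrableOn_Ioc)
    tendsto_id (Eventually.of_forall fun i => ?_)
  have habs : ∀ s, ‖f s‖ = f s := fun s => Real.norm_of_nonneg (hf0 s)
  simpa only [id, habs] using hI (mem_range_self i)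

theorem tendsto_atTop_of_mul_le_hasDerivAt {x x' W w : ℝ → ℝ} {c t₀ : ℝ} (hc : 0 < c)
    (hW : ∀ t ≥ t₀, HasDerivAt W (w t) t) (hWtop : Tendsto W atTop atTop)
    (hx : ∀ t ≥ t₀, HasDerivAt x (x' t) t) (hle : ∀ t ≥ t₀, c * w t ≤ x' t) :
    Tendsto x atTop atTop := by
  have hD : ∀ t ≥ t₀, HasDerivAt (fun t => x t - c * W t) (x' t - c * w t) t := fun t ht =>
    (hx t ht).sub ((hW t ht).const_mul c)
  have hmono : MonotoneOn (fun t => x t - c * W t) (Ici t₀) :=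
    monotoneOn_of_hasDerivWithinAt_nonneg (convex_Ici t₀)
      (fun t ht => (hD t ht).continuousAt.continuousWithinAt)
      (fun t ht => (hD t (interior_subset ht)).hasDerivWithinAt)
      (fun t ht => sub_nonneg.2 (hle t (interior_subset ht)))
  have hlow : ∀ t ≥ t₀, x t₀ - c * W t₀ + c * W t ≤ x t := fun t ht => by
    linarith [hmono (mem_Ici.2 le_rfl) ht ht]
  exact tendsto_atTop_mono' _ ((eventually_ge_atTop t₀).mono hlow)
    (tendsto_atTop_add_const_left _ _ (hWtop.const_mul_atTop hc))

theorem ConvexOn.deriv_pos_of_minimizer_lt {G : ℝ → ℝ} (hG : ConvexOn ℝ univ G) {b y : ℝ}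
    (hd : DifferentiableAt ℝ G y) (hb : ∀ z, G b ≤ G z) (hy : ¬ ∀ z, G y ≤ G z) (hby : b < y) :
    0 < deriv G y := by
  obtain ⟨z, hz⟩ := not_forall.1 hy
  have hslope := hG.slope_le_deriv (mem_univ b) (mem_univ y) hby hd
  rw [slope_def_field] at hslope
  exact (div_pos (by linarith [hb z]) (sub_pos.2 hby)).trans_le hslope

theorem ConvexOn.deriv_neg_of_lt_minimizer {G : ℝ → ℝ} (hG : ConvexOn ℝ univ G) {b y : ℝ}
    (hd : DifferentiableAt ℝ G y) (hb : ∀ z, G b ≤ G z) (hy : ¬ ∀ z, G y ≤ G z) (hyb : y < b) :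
    deriv G y < 0 := by
  obtain ⟨z, hz⟩ := not_forall.1 hy
  have hslope := hG.deriv_le_slope (mem_univ y) (mem_univ b) hyb hd
  rw [slope_def_field] at hslope
  exact hslope.trans_lt (div_neg_of_neg_of_pos (by linarith [hb z]) (sub_pos.2 hyb))

structure IsDampedSolution (a g x : ℝ → ℝ) : Prop where
  differentiable : Differentiable ℝ x
  differentiable_deriv : Differentiable ℝ (deriv x)
  ode : ∀ t ≥ (0:ℝ), deriv (deriv x) t + a t * deriv x t + g (x t) = 0

noncomputable def dampedMomentum (a x : ℝ → ℝ) (t : ℝ) : ℝ :=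
  deriv x t * Real.exp (∫ s in (0:ℝ)..t, a s)

theorem deriv_eq_dampedMomentum_mul_exp (a x : ℝ → ℝ) (t : ℝ) :
    deriv x t = dampedMomentum a x t * Real.exp (-∫ s in (0:ℝ)..t, a s) := by
  rw [dampedMomentum, mul_assoc, ← Real.exp_add, add_neg_cancel, Real.exp_zero, mul_one]

theorem tendsto_atTop_of_mul_exp_neg_integral_le {a x x' : ℝ → ℝ} {c t₀ : ℝ}
    (ha : Continuous a)
    (ha_div : ¬ IntegrableOn (fun t => Real.exp (-∫ s in (0:ℝ)..t, a s)) (Ici 0))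
    (hc : 0 < c) (hx : ∀ t ≥ t₀, HasDerivAt x (x' t) t)
    (hle : ∀ t ≥ t₀, c * Real.exp (-∫ s in (0:ℝ)..t, a s) ≤ x' t) :
    Tendsto x atTop atTop := by
  have hw : Continuous fun t => Real.exp (-∫ s in (0:ℝ)..t, a s) :=
    Real.continuous_exp.comp (intervalIntegral.continuous_primitive ha.intervalIntegrable 0).neg
  exact tendsto_atTop_of_mul_le_hasDerivAt hc
    (fun t _ => (hw.integral_hasStrictDerivAt 0 t).hasDerivAt)
    (tendsto_integral_atTop_of_not_integrableOn_Ici hw (fun t => (Real.exp_pos _).le) ha_div)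
    hx hle

namespace IsDampedSolution

variable {a g x : ℝ → ℝ}

theorem neg (hsol : IsDampedSolution a g x) :
    IsDampedSolution a (fun y => -g (-y)) (fun t => -x t) := by
  have hd : deriv (fun t => -x t) = fun t => -deriv x t := funext fun t => deriv.fun_neg
  refine ⟨hsol.differentiable.neg, hd ▸ hsol.differentiable_deriv.neg, fun t ht => ?_⟩
  rw [hd, deriv.fun_neg, neg_neg]
  linarith [hsol.ode t ht]

theorem eq_of_stationary (hsol : IsDampedSolution a g x) (ha : Continuous a) {T : ℝ}
    {K : NNReal} (hT : 0 ≤ T) (hg : LipschitzOnWith K g (x '' Icc 0 T)) (hgT : g (x T) = 0)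
    (hx'T : deriv x T = 0) : ∀ t ∈ Icc 0 T, x t = x T ∧ deriv x t = 0 := by
  obtain ⟨M, hM⟩ := (isCompact_Icc.image (continuous_nnnorm.comp ha)).bddAbove
  set v : ℝ → ℝ × ℝ → ℝ × ℝ := fun t z => (z.2, -(a t * z.2) - g z.1)
  set S := (x '' Icc 0 T) ×ˢ (univ : Set ℝ)
  have hv : ∀ t ∈ Ioc 0 T, LipschitzOnWith (max 1 (M + K)) (v t) S := fun t ht => by
    have hdamp : LipschitzWith M (fun z : ℝ × ℝ => a t * z.2) :=
      (((lipschitzWith_smul (a t)).weaken (hM ⟨t, Ioc_subset_Icc_self ht, rfl⟩)).comp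
        LipschitzWith.prod_snd).weaken (mul_one M).le
    have hforce : LipschitzOnWith K (fun z : ℝ × ℝ => g z.1) S :=
      (hg.comp LipschitzWith.prod_fst.lipschitzOnWith fun _ hz => hz.1).weaken (mul_one K).le
    exact LipschitzWith.prod_snd.lipschitzOnWith.prodMk (hdamp.lipschitzOnWith.neg.sub hforce)
  have hphase : ∀ t ∈ Ioc 0 T, HasDerivWithinAt (fun t => (x t, deriv x t))
      (v t (x t, deriv x t)) (Iic t) t := fun t ht => by
    refine ((hsol.differentiable t).hasDerivAt.prodMk
      (hsol.differentiable_deriv t).hasDerivAt).hasDerivWithinAt.congr_deriv ?_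
    simp only [v, Prod.mk.injEq, true_and]
    linarith [hsol.ode t ht.1.le]
  have hrest : ∀ t ∈ Ioc 0 T, HasDerivWithinAt (fun _ => (x T, (0:ℝ)))
      (v t (x T, 0)) (Iic t) t := fun t _ =>
    (hasDerivWithinAt_const t (Iic t) (x T, (0:ℝ))).congr_deriv
      (by simp [v, hgT, Prod.zero_eq_mk])
  have hxT : x T ∈ x '' Icc 0 T := ⟨T, right_mem_Icc.2 hT, rfl⟩
  have := ODE_solution_unique_of_mem_Icc_left hv
    (hsol.differentiable.continuous.prodMk hsol.differentiable_deriv.continuous).continuousOn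
    hphase (fun t ht => ⟨⟨t, Ioc_subset_Icc_self ht, rfl⟩, mem_univ _⟩) continuousOn_const hrest
    (fun _ _ => ⟨hxT, mem_univ _⟩) (by simp [hx'T])
  exact fun t ht => Prod.ext_iff.1 (this ht)

theorem hasDerivAt_dampedMomentum (hsol : IsDampedSolution a g x) (ha : Continuous a) {t : ℝ}
    (ht : 0 ≤ t) :
    HasDerivAt (dampedMomentum a x) (-(g (x t) * Real.exp (∫ s in (0:ℝ)..t, a s))) t := by
  refine ((hsol.differentiable_deriv t).hasDerivAt.mul
    (ha.integral_hasStrictDerivAt 0 t).hasDerivAt.exp).congr_deriv ?_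
  linear_combination Real.exp (∫ s in (0:ℝ)..t, a s) * hsol.ode t ht

theorem antitoneOn_dampedMomentum (hsol : IsDampedSolution a g x) (ha : Continuous a) {T : ℝ}
    (hT : 0 ≤ T) (hg : ∀ t ≥ T, 0 ≤ g (x t)) : AntitoneOn (dampedMomentum a x) (Ici T) :=
  antitoneOn_of_hasDerivWithinAt_nonpos (convex_Ici T)
    (fun _ ht => (hsol.hasDerivAt_dampedMomentum ha (hT.trans ht)).continuousAt.continuousWithinAt)
    (fun _ ht =>
      (hsol.hasDerivAt_dampedMomentum ha (hT.trans (interior_subset ht))).hasDerivWithinAt)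
    (fun t ht => neg_nonpos.2 (mul_nonneg (hg t (interior_subset ht)) (Real.exp_pos _).le))

theorem dampedMomentum_nonneg (hsol : IsDampedSolution a g x) (ha : Continuous a)
    (ha_div : ¬ IntegrableOn (fun t => Real.exp (-∫ s in (0:ℝ)..t, a s)) (Ici 0)) {T α : ℝ}
    (hanti : AntitoneOn (dampedMomentum a x) (Ici T)) (hlow : ∀ t ≥ T, α ≤ x t) :
    ∀ t ≥ T, 0 ≤ dampedMomentum a x t := by
  intro t₁ ht₁
  by_contra! hneg
  have hdown : Tendsto (fun t => -x t) atTop atTop :=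
    tendsto_atTop_of_mul_exp_neg_integral_le (x' := fun t => -deriv x t) (t₀ := t₁) ha ha_div
      (neg_pos.2 hneg) (fun t _ => (hsol.differentiable t).hasDerivAt.neg) fun t ht => by
        rw [deriv_eq_dampedMomentum_mul_exp a x t, neg_mul, neg_le_neg_iff]
        exact mul_le_mul_of_nonneg_right (hanti ht₁ (ht₁.trans ht) ht) (Real.exp_pos _).le
  obtain ⟨t, hlt, ht⟩ := ((hdown.eventually_gt_atTop (-α)).and (eventually_ge_atTop t₁)).exists
  linarith [hlow t (ht₁.trans ht)]

theorem le_of_dampedMomentum_nonneg (hsol : IsDampedSolution a g x) (ha : Continuous a)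
    (ha0 : ∀ t ≥ (0:ℝ), 0 ≤ a t) (hgmono : Monotone g) {β T : ℝ} (hgpos : ∀ y, β < y → 0 < g y)
    (hT : 0 ≤ T) (hh0 : ∀ t ≥ T, 0 ≤ dampedMomentum a x t) : ∀ t ≥ T, x t ≤ β := by
  have hxmono : MonotoneOn x (Ici T) :=
    monotoneOn_of_hasDerivWithinAt_nonneg (convex_Ici T)
      hsol.differentiable.continuous.continuousOn
      (fun t _ => (hsol.differentiable t).hasDerivAt.hasDerivWithinAt) fun t ht => by
        rw [deriv_eq_dampedMomentum_mul_exp a x t]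
        exact mul_nonneg (hh0 t (interior_subset ht)) (Real.exp_pos _).le
  intro t₂ ht₂
  by_contra! hβ
  have hforce : ∀ t ≥ t₂, g (x t₂) * Real.exp (∫ s in (0:ℝ)..t₂, a s)
      ≤ g (x t) * Real.exp (∫ s in (0:ℝ)..t, a s) := fun t ht => by
    have hgt : g (x t₂) ≤ g (x t) := hgmono (hxmono ht₂ (ht₂.trans ht) ht)
    have hA : ∫ s in (0:ℝ)..t₂, a s ≤ ∫ s in (0:ℝ)..t, a s :=
      intervalIntegral.integral_mono_interval le_rfl (hT.trans ht₂) ht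
        ((ae_restrict_mem measurableSet_Ioc).mono fun s hs => ha0 s hs.1.le)
        (ha.intervalIntegrable 0 t)
    exact mul_le_mul hgt (Real.exp_le_exp.2 hA) (Real.exp_pos _).le ((hgpos _ hβ).le.trans hgt)
  have hup : Tendsto (fun t => -dampedMomentum a x t) atTop atTop :=
    tendsto_atTop_of_mul_le_hasDerivAt (W := id) (w := fun _ => 1) (t₀ := t₂)
      (mul_pos (hgpos _ hβ) (Real.exp_pos _)) (fun t _ => hasDerivAt_id t) tendsto_id
      (fun t ht => (hsol.hasDerivAt_dampedMomentum ha (hT.trans (ht₂.trans ht))).neg)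
      fun t ht => by rw [neg_neg, mul_one]; exact hforce t ht
  obtain ⟨t, hlt, ht⟩ := ((hup.eventually_gt_atTop 0).and (eventually_ge_atTop t₂)).exists
  linarith [hh0 t (ht₂.trans ht)]

theorem frequently_lt (hsol : IsDampedSolution a g x) (ha : Continuous a)
    (ha0 : ∀ t ≥ (0:ℝ), 0 ≤ a t)
    (ha_div : ¬ IntegrableOn (fun t => Real.exp (-∫ s in (0:ℝ)..t, a s)) (Ici 0))
    (hgmono : Monotone g) {α β : ℝ} (hg0 : ∀ y ∈ Icc α β, g y = 0)
    (hgpos : ∀ y, β < y → 0 < g y)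
    (hglip : ∀ s : Set ℝ, Bornology.IsBounded s → ∃ K : NNReal, LipschitzOnWith K g s)
    (hinit : ¬ (x 0 ∈ Icc α β ∧ deriv x 0 = 0)) : ∃ᶠ t in atTop, x t < α := by
  refine frequently_atTop.2 fun c => ?_
  by_contra! hcon
  set T := max c 0
  have hT : 0 ≤ T := le_max_right c 0
  have hlow : ∀ t ≥ T, α ≤ x t := fun t ht => hcon t ((le_max_left c 0).trans ht)
  have hgnn : ∀ y, α ≤ y → 0 ≤ g y := fun y hy =>
    (le_or_gt y β).elim (fun h => (hg0 y ⟨hy, h⟩).ge) fun h => (hgpos y h).le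
  have hh0 := hsol.dampedMomentum_nonneg ha ha_div
    (hsol.antitoneOn_dampedMomentum ha hT fun t ht => hgnn _ (hlow t ht)) hlow
  have hup := hsol.le_of_dampedMomentum_nonneg ha ha0 hgmono hgpos hT hh0
  have hrest : ∀ t ≥ T, g (x t) = 0 := fun t ht => hg0 _ ⟨hlow t ht, hup t ht⟩
  have hconst : ∀ t ≥ T, dampedMomentum a x t = dampedMomentum a x T := fun t ht =>
    constant_of_has_deriv_right_zero
      (fun s hs =>
        (hsol.hasDerivAt_dampedMomentum ha (hT.trans hs.1)).continuousAt.continuousWithinAt)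
      (fun s hs => by
        simpa [hrest s hs.1] using
          (hsol.hasDerivAt_dampedMomentum ha (hT.trans hs.1)).hasDerivWithinAt)
      t ⟨ht, le_rfl⟩
  rcases (hh0 T le_rfl).eq_or_lt with h0 | hpos
  · have hx'T : deriv x T = 0 := by simpa [dampedMomentum] using h0.symm
    obtain ⟨K, hK⟩ := hglip _ (isCompact_Icc.image hsol.differentiable.continuous).isBounded
    obtain ⟨hx0, hx'0⟩ :=
      hsol.eq_of_stationary ha hT hK (hrest T le_rfl) hx'T 0 (left_mem_Icc.2 hT)
    exact hinit ⟨hx0 ▸ ⟨hlow T le_rfl, hup T le_rfl⟩, hx'0⟩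
  · have hx : Tendsto x atTop atTop :=
      tendsto_atTop_of_mul_exp_neg_integral_le ha ha_div hpos
        (fun t _ => (hsol.differentiable t).hasDerivAt) fun t ht => by
          rw [deriv_eq_dampedMomentum_mul_exp a x t, hconst t ht]
    obtain ⟨t, hlt, ht⟩ := ((hx.eventually_gt_atTop β).and (eventually_ge_atTop T)).exists
    linarith [hup t ht]

theorem frequently_gt (hsol : IsDampedSolution a g x) (ha : Continuous a)
    (ha0 : ∀ t ≥ (0:ℝ), 0 ≤ a t)
    (ha_div : ¬ IntegrableOn (fun t => Real.exp (-∫ s in (0:ℝ)..t, a s)) (Ici 0))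
    (hgmono : Monotone g) {α β : ℝ} (hg0 : ∀ y ∈ Icc α β, g y = 0)
    (hgneg : ∀ y, y < α → g y < 0)
    (hglip : ∀ s : Set ℝ, Bornology.IsBounded s → ∃ K : NNReal, LipschitzOnWith K g s)
    (hinit : ¬ (x 0 ∈ Icc α β ∧ deriv x 0 = 0)) : ∃ᶠ t in atTop, β < x t := by
  refine (hsol.neg.frequently_lt (α := -β) (β := -α) ha ha0 ha_div
    (fun u v huv => neg_le_neg (hgmono (neg_le_neg huv)))
    (fun y hy => by rw [hg0 (-y) ⟨by linarith [hy.2], by linarith [hy.1]⟩, neg_zero])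
    (fun y hy => neg_pos.2 (hgneg (-y) (by linarith)))
    (fun s hs => ?_) fun ⟨⟨h1, h2⟩, h3⟩ => hinit ?_).mono fun t ht => by linarith
  · obtain ⟨K, hK⟩ := hglip (-s) hs.neg
    exact ⟨K, fun y hy z hz => by
      simpa only [edist_neg_neg] using hK (neg_mem_neg.2 hy) (neg_mem_neg.2 hz)⟩
  · rw [deriv.fun_neg, neg_eq_zero] at h3
    exact ⟨⟨by linarith, by linarith⟩, h3⟩

end IsDampedSolution

theorem stmt_19_general
    (a : ℝ → ℝ) (ha_cont : Continuous a) (ha_nonneg : ∀ t ≥ (0:ℝ), 0 ≤ a t)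
    (ha_div : ¬ MeasureTheory.IntegrableOn
      (fun t => Real.exp (-∫ s in (0:ℝ)..t, a s)) (Set.Ici 0))
    (G : ℝ → ℝ) (hGconv : ConvexOn ℝ Set.univ G) (hG : ContDiff ℝ 1 G)
    (hG'lip : ∀ s : Set ℝ, Bornology.IsBounded s →
      ∃ K : NNReal, LipschitzOnWith K (deriv G) s)
    (α β : ℝ) (hαβ : α < β)
    (hargmin : {y : ℝ | ∀ z, G y ≤ G z} = Set.Icc α β)
    (x : ℝ → ℝ) (hx : ContDiff ℝ 2 x)
    (hode : ∀ t ≥ (0:ℝ), deriv (deriv x) t + a t * deriv x t + deriv G (x t) = 0)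
    (hinit : ¬ (x 0 ∈ Set.Icc α β ∧ deriv x 0 = 0)) :
    (¬ ∃ l : ℝ, Filter.Tendsto x Filter.atTop (nhds l)) ∧
    (∀ n : ℕ, ∃ t ≥ (n:ℝ), x t < α) ∧
    (∀ n : ℕ, ∃ t ≥ (n:ℝ), β < x t) := by
  have hGd : Differentiable ℝ G := hG.differentiable one_ne_zero
  have hmin (y : ℝ) : (∀ z, G y ≤ G z) ↔ y ∈ Icc α β := Set.ext_iff.1 hargmin y
  have hg0 (y : ℝ) (hy : y ∈ Icc α β) : deriv G y = 0 :=
    IsLocalMin.deriv_eq_zero (.of_forall ((hmin y).2 hy))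
  have hgpos (y : ℝ) (hy : β < y) : 0 < deriv G y :=
    hGconv.deriv_pos_of_minimizer_lt (hGd y) ((hmin β).2 ⟨hαβ.le, le_rfl⟩)
      (fun h => ((hmin y).1 h).2.not_gt hy) hy
  have hgneg (y : ℝ) (hy : y < α) : deriv G y < 0 :=
    hGconv.deriv_neg_of_lt_minimizer (hGd y) ((hmin α).2 ⟨le_rfl, hαβ.le⟩)
      (fun h => ((hmin y).1 h).1.not_gt hy) hy
  have hgmono : Monotone (deriv G) :=
    monotoneOn_univ.1 (hGconv.monotoneOn_deriv fun y _ => hGd y)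
  have hsol : IsDampedSolution a (deriv G) x :=
    ⟨hx.differentiable two_ne_zero, hx.differentiable_deriv_two, hode⟩
  have below := hsol.frequently_lt ha_cont ha_nonneg ha_div hgmono hg0 hgpos hG'lip hinit
  have above := hsol.frequently_gt ha_cont ha_nonneg ha_div hgmono hg0 hgneg hG'lip hinit
  refine ⟨fun ⟨l, hl⟩ => ?_, fun n => frequently_atTop.1 below n,
    fun n => frequently_atTop.1 above n⟩
  linarith [le_of_tendsto_of_frequently hl (below.mono fun _ => le_of_lt),
    ge_of_tendsto_of_frequently hl (above.mono fun _ => le_of_lt)]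

/-- Non-convergence of trajectories when `argmin G = [α, β]` is a nondegenerate interval
and `∫₀^∞ e^{-∫₀ᵗ a} dt = ∞`: the solution oscillates below `α` and above `β` at
arbitrarily large times, and in particular does not converge. -/
theorem stmt_19
    (a : ℝ → ℝ) (ha_cont : Continuous a) (ha_nonneg : ∀ t ≥ (0:ℝ), 0 ≤ a t)
    (ha_div : ¬ MeasureTheory.IntegrableOn
      (fun t => Real.exp (-∫ s in (0:ℝ)..t, a s)) (Set.Ici 0))
    (G : ℝ → ℝ) (hGconv : ConvexOn ℝ Set.univ G) (hG : ContDiff ℝ 1 G)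
    (hG'lip : ∀ s : Set ℝ, Bornology.IsBounded s →
      ∃ K : NNReal, LipschitzOnWith K (deriv G) s)
    (α β : ℝ) (hαβ : α < β)
    (hargmin : {y : ℝ | ∀ z, G y ≤ G z} = Set.Icc α β)
    (x : ℝ → ℝ) (hx : ContDiff ℝ 2 x)
    (hx_bdd : ∃ C, ∀ t ≥ (0:ℝ), |x t| ≤ C)
    (hode : ∀ t ≥ (0:ℝ), deriv (deriv x) t + a t * deriv x t + deriv G (x t) = 0)
    (hinit : ¬ (x 0 ∈ Set.Icc α β ∧ deriv x 0 = 0)) :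
    (¬ ∃ l : ℝ, Filter.Tendsto x Filter.atTop (nhds l)) ∧
    (∀ n : ℕ, ∃ t ≥ (n:ℝ), x t < α) ∧
    (∀ n : ℕ, ∃ t ≥ (n:ℝ), β < x t) :=
  stmt_19_general a ha_cont ha_nonneg ha_div G hGconv hG hG'lip α β hαβ hargmin x hx hode hinit
end
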